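/- arXiv:2001.10333 — 9 statements merged into one kernel-verified Lean document; each statement's English description precedes it below -/
import Mathlib

section
/- Suppose a frame 𝔎 = (K, R, ⋆, I) satisfies (involution). Then: (1) if 𝔎 satisfies at least one of (left rotation), (right rotation) and at least one of (center reflection), (left reflection), (right reflection), then 𝔎 satisfies all five conditions (left rotation), (right rotation), (center reflection), (left reflection), (right reflection); (2) if 𝔎 satisfies at least two distinct conditions among (center reflection), (left reflection), (right reflection), then 𝔎 satisfies all five conditions (left rotation), (right rotation), (center reflection), (left reflection), (right reflection). -/
/-!
Since `⋆` is an involution, each condition says that `R` is closed under a permutation of its three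
arguments combined with starring some of them, and chaining two conditions closes `R` under the
composite. The rotations are 3-cycles, each the square of the other, and the reflections are
transpositions. A 3-cycle followed by a transposition is another transposition, and two distinct
transpositions compose to a 3-cycle, so one rotation and one reflection, or two reflections,
generate everything.
-/

/-- Frame condition (left rotation): `R x y z → R y (⋆z) (⋆x)`. -/
def LeftRot {K : Type*} (R : K → K → K → Prop) (s : K → K) : Prop :=
  ∀ x y z, R x y z → R y (s z) (s x)

/-- Frame condition (right rotation): `R x y z → R (⋆z) x (⋆y)`. -/
def RightRot {K : Type*} (R : K → K → K → Prop) (s : K → K) : Prop :=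
  ∀ x y z, R x y z → R (s z) x (s y)

/-- Frame condition (center reflection): `R x y z → R (⋆y) (⋆x) (⋆z)`. -/
def CenterRefl {K : Type*} (R : K → K → K → Prop) (s : K → K) : Prop :=
  ∀ x y z, R x y z → R (s y) (s x) (s z)

/-- Frame condition (left reflection): `R x y z → R (⋆x) z y`. -/
def LeftRefl {K : Type*} (R : K → K → K → Prop) (s : K → K) : Prop :=
  ∀ x y z, R x y z → R (s x) z y

/-- Frame condition (right reflection): `R x y z → R z (⋆y) x`. -/
def RightRefl {K : Type*} (R : K → K → K → Prop) (s : K → K) : Prop :=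
  ∀ x y z, R x y z → R z (s y) x

section FrameConditions

variable {K : Type*} {R : K → K → K → Prop} {s : K → K}

theorem LeftRot.rightRot (hinv : ∀ x, s (s x) = x) (h : LeftRot R s) : RightRot R s :=
  fun x y z hxyz => by simpa only [hinv] using h _ _ _ (h x y z hxyz)

theorem RightRot.leftRot (hinv : ∀ x, s (s x) = x) (h : RightRot R s) : LeftRot R s :=
  fun x y z hxyz => by simpa only [hinv] using h _ _ _ (h x y z hxyz)

theorem LeftRot.rightRefl_of_centerRefl (hinv : ∀ x, s (s x) = x) (h : LeftRot R s)
    (hc : CenterRefl R s) : RightRefl R s :=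
  fun x y z hxyz => by simpa only [hinv] using hc _ _ _ (h x y z hxyz)

theorem LeftRot.centerRefl_of_leftRefl (h : LeftRot R s) (hl : LeftRefl R s) :
    CenterRefl R s :=
  fun x y z hxyz => hl _ _ _ (h x y z hxyz)

theorem LeftRot.leftRefl_of_rightRefl (hinv : ∀ x, s (s x) = x) (h : LeftRot R s)
    (hr : RightRefl R s) : LeftRefl R s :=
  fun x y z hxyz => by simpa only [hinv] using hr _ _ _ (h x y z hxyz)

theorem CenterRefl.leftRot_of_leftRefl (hinv : ∀ x, s (s x) = x) (hc : CenterRefl R s)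
    (hl : LeftRefl R s) : LeftRot R s :=
  fun x y z hxyz => by simpa only [hinv] using hl _ _ _ (hc x y z hxyz)

theorem CenterRefl.leftRot_of_rightRefl (hinv : ∀ x, s (s x) = x) (hc : CenterRefl R s)
    (hr : RightRefl R s) : LeftRot R s :=
  fun x y z hxyz => by simpa only [hinv] using hc _ _ _ (hr x y z hxyz)

theorem LeftRefl.rightRot_of_rightRefl (hl : LeftRefl R s) (hr : RightRefl R s) :
    RightRot R s :=
  fun x y z hxyz => hl _ _ _ (hr x y z hxyz)

theorem LeftRot.all_of_centerRefl (hinv : ∀ x, s (s x) = x) (h : LeftRot R s)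
    (hc : CenterRefl R s) :
    LeftRot R s ∧ RightRot R s ∧ CenterRefl R s ∧ LeftRefl R s ∧ RightRefl R s :=
  have hr := h.rightRefl_of_centerRefl hinv hc
  ⟨h, h.rightRot hinv, hc, h.leftRefl_of_rightRefl hinv hr, hr⟩

theorem LeftRot.all_of_refl (hinv : ∀ x, s (s x) = x) (h : LeftRot R s)
    (hrefl : CenterRefl R s ∨ LeftRefl R s ∨ RightRefl R s) :
    LeftRot R s ∧ RightRot R s ∧ CenterRefl R s ∧ LeftRefl R s ∧ RightRefl R s := by
  rcases hrefl with hc | hl | hr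
  · exact h.all_of_centerRefl hinv hc
  · exact h.all_of_centerRefl hinv (h.centerRefl_of_leftRefl hl)
  · exact h.all_of_centerRefl hinv (h.centerRefl_of_leftRefl (h.leftRefl_of_rightRefl hinv hr))

end FrameConditions

theorem lemma_five_general {K : Type*} (R : K → K → K → Prop) (s : K → K)
    (hinv : ∀ x : K, s (s x) = x) :
    (((LeftRot R s ∨ RightRot R s) ∧
        (CenterRefl R s ∨ LeftRefl R s ∨ RightRefl R s)) →
      LeftRot R s ∧ RightRot R s ∧ CenterRefl R s ∧ LeftRefl R s ∧ RightRefl R s) ∧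
    (((CenterRefl R s ∧ LeftRefl R s) ∨ (CenterRefl R s ∧ RightRefl R s) ∨
        (LeftRefl R s ∧ RightRefl R s)) →
      LeftRot R s ∧ RightRot R s ∧ CenterRefl R s ∧ LeftRefl R s ∧ RightRefl R s) := by
  constructor
  · rintro ⟨hl | hr, hrefl⟩
    · exact hl.all_of_refl hinv hrefl
    · exact (hr.leftRot hinv).all_of_refl hinv hrefl
  · rintro (⟨hc, hl⟩ | ⟨hc, hr⟩ | ⟨hl, hr⟩)
    · exact (hc.leftRot_of_leftRefl hinv hl).all_of_centerRefl hinv hc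
    · exact (hc.leftRot_of_rightRefl hinv hr).all_of_centerRefl hinv hc
    · exact ((hl.rightRot_of_rightRefl hr).leftRot hinv).all_of_refl hinv (.inr (.inl hl))

/-- Lemma "five": in a frame `(K, R, ⋆, I)` satisfying (involution),
(1) one rotation plus one reflection gives all five conditions;
(2) any two distinct reflections give all five conditions. -/
theorem lemma_five {K : Type*} (R : K → K → K → Prop) (s : K → K) (I : Set K)
    (hinv : ∀ x : K, s (s x) = x) :
    (((LeftRot R s ∨ RightRot R s) ∧
        (CenterRefl R s ∨ LeftRefl R s ∨ RightRefl R s)) →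
      LeftRot R s ∧ RightRot R s ∧ CenterRefl R s ∧ LeftRefl R s ∧ RightRefl R s) ∧
    (((CenterRefl R s ∧ LeftRefl R s) ∨ (CenterRefl R s ∧ RightRefl R s) ∨
        (LeftRefl R s ∧ RightRefl R s)) →
      LeftRot R s ∧ RightRot R s ∧ CenterRefl R s ∧ LeftRefl R s ∧ RightRefl R s) :=
  lemma_five_general R s hinv
end

section
/- Let 𝔎 = (K, R, ⋆, I) be a frame satisfying (left reflection) and (identity). Then 𝔎 satisfies (involution), and for all x, y, z ∈ K one has R x y z ↔ R (⋆x) z y (i.e., the left reflection condition holds as a biconditional). -/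
/-- Frame condition (identity): `x = y ↔ ∃ u ∈ I, R x u y`. -/
def IdentityCond {K : Type*} (R : K → K → K → Prop) (I : Set K) : Prop :=
  ∀ x y, x = y ↔ ∃ u, u ∈ I ∧ R x u y

namespace LeftRefl

variable {K : Type*} {R : K → K → K → Prop} {s : K → K}

theorem involutive_of_identityCond {I : Set K} (hlr : LeftRefl R s) (hid : IdentityCond R I) :
    Function.Involutive s := by
  intro x
  obtain ⟨u, hu, hxux⟩ := (hid x x).mp rfl
  exact (hid (s (s x)) x).mpr ⟨u, hu, hlr _ _ _ (hlr _ _ _ hxux)⟩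

theorem iff_of_involutive (hlr : LeftRefl R s) (hs : Function.Involutive s) (x y z : K) :
    R x y z ↔ R (s x) z y :=
  ⟨hlr x y z, fun h => hs x ▸ hlr _ _ _ h⟩

end LeftRefl

/-- Lemma lem8(i): a frame satisfying (left reflection) and (identity) satisfies
(involution), and left reflection holds as a biconditional. -/
theorem lem8_i {K : Type*} (R : K → K → K → Prop) (s : K → K) (I : Set K)
    (hlr : LeftRefl R s) (hid : IdentityCond R I) :
    (∀ x : K, s (s x) = x) ∧ (∀ x y z : K, R x y z ↔ R (s x) z y) :=
  have hs := hlr.involutive_of_identityCond hid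
  ⟨hs, hlr.iff_of_involutive hs⟩
end

section
/- Let 𝔎 = (K, R, ⋆, I) be a frame satisfying (left reflection), (right reflection), and (identity). Then ⋆v = v for every v ∈ I. -/
/-! For `v ∈ I`, left reflection turns `R v u v` into `R (⋆v) v u`, so (identity) forces `⋆v = u`.
Applied to the identity witness `u` of `v`, then to `u` itself, and finally to `R v (⋆u) v`
from right reflection, this yields `⋆v = u`, `⋆u = v` and hence `R v v v`, i.e. `⋆v = v`. -/

theorem star_eq_of_rel_self {K : Type*} {R : K → K → K → Prop} {s : K → K} {I : Set K}
    (hlr : LeftRefl R s) (hid : IdentityCond R I) {v u : K} (hv : v ∈ I) (h : R v u v) :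
    s v = u :=
  (hid _ _).mpr ⟨v, hv, hlr v u v h⟩

/-- Lemma lem8(ii): in a frame satisfying (left reflection), (right reflection),
and (identity), every element of `I` is fixed by `⋆`. -/
theorem lem8_ii {K : Type*} (R : K → K → K → Prop) (s : K → K) (I : Set K)
    (hlr : LeftRefl R s) (hrr : RightRefl R s) (hid : IdentityCond R I) :
    ∀ v ∈ I, s v = v := by
  intro v hv
  obtain ⟨u, hu, hvuv⟩ := (hid v v).mp rfl
  have hsv : s v = u := star_eq_of_rel_self hlr hid hv hvuv
  have hsu : s u = v := star_eq_of_rel_self hlr hid hu (hsv ▸ hlr v u v hvuv)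
  exact star_eq_of_rel_self hlr hid hv (hsu ▸ hrr v u v hvuv)
end

section
/- Let 𝔎 = (K, R, ⋆, I) be a frame satisfying (left reflection), (right reflection), (identity), and (semi-Pasch). If x ∈ K, u, v ∈ I, R x u x, and R x v x, then u = v. -/
/-- Frame condition (semi-Pasch): `(∃ x, R v w x ∧ R x y z) → ∃ u, R v u z`. -/
def SemiPasch {K : Type*} (R : K → K → K → Prop) : Prop :=
  ∀ v w y z, (∃ x, R v w x ∧ R x y z) → ∃ u, R v u z

/-! (Semi-Pasch), applied to the reflections of `R x u x` and `R x v x`, yields `e` with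
`R u e v`. Left reflection turns this into `R (⋆u) v e`, so `e = ⋆u` by (identity) as `v ∈ I`;
the same argument applied to `R u i u` with `i ∈ I` shows `⋆u ∈ I`, hence `u = v`. -/

section

variable {K : Type*} {R : K → K → K → Prop} {s : K → K} {I : Set K}

theorem IdentityCond.eq_of_rel (hid : IdentityCond R I) {x y u : K} (hu : u ∈ I)
    (h : R x u y) : x = y :=
  (hid x y).mpr ⟨u, hu, h⟩

theorem IdentityCond.star_eq_of_rel (hid : IdentityCond R I) (hlr : LeftRefl R s)
    {x y z : K} (hz : z ∈ I) (h : R x y z) : s x = y :=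
  hid.eq_of_rel hz (hlr x y z h)

theorem IdentityCond.star_mem (hid : IdentityCond R I) (hlr : LeftRefl R s) {u : K}
    (hu : u ∈ I) : s u ∈ I := by
  obtain ⟨i, hi, hrel⟩ := (hid u u).mp rfl
  rwa [hid.star_eq_of_rel hlr hu hrel]

theorem SemiPasch.exists_rel_of_rel_self (hsp : SemiPasch R) (hlr : LeftRefl R s)
    (hrr : RightRefl R s) {x u v : K} (hu : R x u x) (hv : R x v x) : ∃ e, R u e v :=
  hsp u (s x) x v ⟨s x, hrr _ _ _ (hlr _ _ _ hu), hlr _ _ _ hv⟩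

end

/-- Lemma lem8(iii): in a frame satisfying (left reflection), (right reflection),
(identity), and (semi-Pasch), if `u, v ∈ I`, `R x u x`, and `R x v x`, then `u = v`. -/
theorem lem8_iii {K : Type*} (R : K → K → K → Prop) (s : K → K) (I : Set K)
    (hlr : LeftRefl R s) (hrr : RightRefl R s) (hid : IdentityCond R I)
    (hsp : SemiPasch R) :
    ∀ (x u v : K), u ∈ I → v ∈ I → R x u x → R x v x → u = v := by
  intro x u v hu hv hxu hxv
  obtain ⟨e, he⟩ := hsp.exists_rel_of_rel_self hlr hrr hxu hxv
  have he_eq : s u = e := hid.star_eq_of_rel hlr hv he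
  exact hid.eq_of_rel (he_eq ▸ hid.star_mem hlr hu) he
end

section
/- Let 𝔎 = (K, R, ⋆, I) be a frame. Then: (1) Cm(𝔎) is a non-associative relation algebra if and only if 𝔎 satisfies (left reflection), (right reflection), and (identity); (2) Cm(𝔎) is a semi-associative relation algebra if and only if 𝔎 satisfies (left reflection), (right reflection), (identity), and (semi-Pasch); (3) Cm(𝔎) is a relation algebra if and only if 𝔎 satisfies (left reflection), (right reflection), (identity), and (Pasch). -/
/-- Composition in the complex algebra of a frame. -/
def scomp {K : Type*} (R : K → K → K → Prop) (X Y : Set K) : Set K :=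
  {z | ∃ x ∈ X, ∃ y ∈ Y, R x y z}

/-- Converse in the complex algebra of a frame. -/
def sconv {K : Type*} (s : K → K) (X : Set K) : Set K := s '' X

/-- The complex algebra of the frame `(K, R, ⋆, I)` is a non-associative
relation algebra. -/
def CmNA {K : Type*} (R : K → K → K → Prop) (s : K → K) (I : Set K) : Prop :=
  (∀ X Y Z : Set K, scomp R (X ∪ Y) Z = scomp R X Z ∪ scomp R Y Z) ∧
  (∀ X : Set K, scomp R X I = X) ∧
  (∀ X : Set K, sconv s (sconv s X) = X) ∧
  (∀ X Y : Set K, sconv s (X ∪ Y) = sconv s X ∪ sconv s Y) ∧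
  (∀ X Y : Set K, sconv s (scomp R X Y) = scomp R (sconv s Y) (sconv s X)) ∧
  (∀ X Y : Set K, scomp R (sconv s X) (scomp R X Y)ᶜ ⊆ Yᶜ)

/-- The complex algebra is a semi-associative relation algebra. -/
def CmSA {K : Type*} (R : K → K → K → Prop) (s : K → K) (I : Set K) : Prop :=
  CmNA R s I ∧
  ∀ X Y : Set K, scomp R X (scomp R Y Set.univ) = scomp R (scomp R X Y) Set.univ

/-- The complex algebra is a relation algebra. -/
def CmRA {K : Type*} (R : K → K → K → Prop) (s : K → K) (I : Set K) : Prop :=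
  CmNA R s I ∧
  ∀ X Y Z : Set K, scomp R X (scomp R Y Z) = scomp R (scomp R X Y) Z

/-- Frame condition (Pasch). -/
def Pasch {K : Type*} (R : K → K → K → Prop) : Prop :=
  ∀ v w y z, (∃ x, R v w x ∧ R x y z) → ∃ u, R v u z ∧ R w y u

/-! All operations of `Cm(𝔎)` are computed elementwise, so each axiom of `Cm(𝔎)`, tested on
singletons, is exactly one frame condition, and conversely the frame conditions give the axioms
element by element. Left reflection applied twice, together with (identity), makes `⋆` an
involution; the reflections then rotate a (semi-)Pasch configuration into the position required by
either inclusion of `X;(Y;K) = (X;Y);K` (resp. of associativity). -/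

section ComplexAlgebra

variable {K : Type*} {R : K → K → K → Prop} {s : K → K} {I : Set K}

@[simp]
theorem mem_scomp {X Y : Set K} {z : K} : z ∈ scomp R X Y ↔ ∃ x ∈ X, ∃ y ∈ Y, R x y z :=
  Iff.rfl

theorem scomp_union_left (X Y Z : Set K) : scomp R (X ∪ Y) Z = scomp R X Z ∪ scomp R Y Z := by
  ext z
  simp only [mem_scomp, Set.mem_union, or_and_right, exists_or]

theorem LeftRefl.involutive (lr : LeftRefl R s) (idc : IdentityCond R I) :
    Function.Involutive s := fun x => by
  obtain ⟨u, hu, hR⟩ := (idc x x).mp rfl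
  exact (idc (s (s x)) x).mpr ⟨u, hu, lr _ _ _ (lr _ _ _ hR)⟩

theorem LeftRefl.rel_conv (lr : LeftRefl R s) (rr : RightRefl R s) {x y z : K}
    (h : R x y z) : R (s y) (s x) (s z) :=
  lr _ _ _ (rr _ _ _ (lr _ _ _ h))

theorem IdentityCond.scomp_right (idc : IdentityCond R I) (X : Set K) : scomp R X I = X := by
  ext z
  constructor
  · rintro ⟨x, hx, u, hu, hR⟩
    rwa [← (idc x z).mpr ⟨u, hu, hR⟩]
  · intro hz
    obtain ⟨u, hu, hR⟩ := (idc z z).mp rfl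
    exact ⟨z, hz, u, hu, hR⟩

theorem sconv_sconv (hs : Function.Involutive s) (X : Set K) : sconv s (sconv s X) = X := by
  simp only [sconv, Set.image_image, hs _, Set.image_id']

theorem sconv_scomp (lr : LeftRefl R s) (rr : RightRefl R s) (hs : Function.Involutive s)
    (X Y : Set K) : sconv s (scomp R X Y) = scomp R (sconv s Y) (sconv s X) := by
  ext w
  constructor
  · rintro ⟨z, ⟨x, hx, y, hy, hR⟩, rfl⟩
    exact ⟨s y, ⟨y, hy, rfl⟩, s x, ⟨x, hx, rfl⟩, lr.rel_conv rr hR⟩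
  · rintro ⟨_, ⟨y, hy, rfl⟩, _, ⟨x, hx, rfl⟩, hR⟩
    refine ⟨s w, ⟨x, hx, y, hy, ?_⟩, hs w⟩
    simpa only [hs _] using lr.rel_conv rr hR

theorem scomp_sconv_compl_subset (lr : LeftRefl R s) (hs : Function.Involutive s)
    (X Y : Set K) : scomp R (sconv s X) (scomp R X Y)ᶜ ⊆ Yᶜ := by
  rintro w ⟨_, ⟨x, hx, rfl⟩, b, hb, hR⟩ hw
  have hxwb : R x w b := by simpa only [hs x] using lr _ _ _ hR
  exact hb ⟨x, hx, w, hw, hxwb⟩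

theorem cmNA_of_frame (lr : LeftRefl R s) (rr : RightRefl R s) (idc : IdentityCond R I) :
    CmNA R s I :=
  have hs := lr.involutive idc
  ⟨scomp_union_left, idc.scomp_right, sconv_sconv hs, Set.image_union s, sconv_scomp lr rr hs,
    scomp_sconv_compl_subset lr hs⟩

theorem CmNA.involutive (h : CmNA R s I) : Function.Involutive s := fun x => by
  have hx : s (s x) ∈ sconv s (sconv s {x}) := ⟨s x, ⟨x, rfl, rfl⟩, rfl⟩
  rwa [h.2.2.1] at hx

theorem CmNA.leftRefl (h : CmNA R s I) : LeftRefl R s := by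
  intro x y z hR
  by_contra hzy
  have hy : y ∈ (scomp R {s x} {z})ᶜ := by
    rintro ⟨_, rfl, _, rfl, hc⟩
    exact hzy hc
  have hR' : R (s (s x)) y z := by rwa [h.involutive x]
  -- the cycle law `X⌣;(X;Y)ᶜ ⊆ Yᶜ` at `X = {⋆x}`, `Y = {z}`
  exact h.2.2.2.2.2 {s x} {z} ⟨s (s x), ⟨s x, rfl, rfl⟩, y, hy, hR'⟩ rfl

theorem CmNA.rel_conv (h : CmNA R s I) {x y z : K} (hR : R x y z) :
    R (s y) (s x) (s z) := by
  have hz : s z ∈ sconv s (scomp R {x} {y}) := ⟨z, ⟨x, rfl, y, rfl, hR⟩, rfl⟩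
  rw [h.2.2.2.2.1] at hz
  obtain ⟨_, ⟨_, rfl, rfl⟩, _, ⟨_, rfl, rfl⟩, hc⟩ := hz
  exact hc

theorem CmNA.rightRefl (h : CmNA R s I) : RightRefl R s := by
  intro x y z hR
  have hyzx : R y (s z) (s x) := by
    simpa only [h.involutive _] using h.leftRefl _ _ _ (h.rel_conv hR)
  simpa only [h.involutive _] using h.rel_conv hyzx

theorem CmNA.identityCond (h : CmNA R s I) : IdentityCond R I := by
  have hI (x : K) : scomp R {x} I = {x} := h.2.1 {x}
  intro x y
  constructor
  · rintro rfl
    obtain ⟨_, rfl, u, hu, hR⟩ : x ∈ scomp R {x} I := (hI x).ge rfl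
    exact ⟨u, hu, hR⟩
  · rintro ⟨u, hu, hR⟩
    exact ((hI x).le ⟨x, rfl, u, hu, hR⟩ : y = x).symm

theorem cmNA_iff_frame :
    CmNA R s I ↔ LeftRefl R s ∧ RightRefl R s ∧ IdentityCond R I :=
  ⟨fun h => ⟨h.leftRefl, h.rightRefl, h.identityCond⟩,
    fun ⟨lr, rr, idc⟩ => cmNA_of_frame lr rr idc⟩

theorem SemiPasch.scomp_assoc_univ (lr : LeftRefl R s) (rr : RightRefl R s)
    (hs : Function.Involutive s) (sp : SemiPasch R) (X Y : Set K) :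
    scomp R X (scomp R Y Set.univ) = scomp R (scomp R X Y) Set.univ := by
  ext z
  constructor
  · rintro ⟨x, hx, t, ⟨y, hy, q, -, hyqt⟩, hxtz⟩
    obtain ⟨u, hyux⟩ := sp y q (s z) (s x) ⟨t, hyqt, rr _ _ _ (lr _ _ _ hxtz)⟩
    have hxyu : R x y (s u) := by simpa only [hs x] using lr _ _ _ (rr _ _ _ hyux)
    obtain ⟨r, hr⟩ := sp (s u) (s y) t z ⟨x, rr _ _ _ hxyu, hxtz⟩
    exact ⟨s u, ⟨x, hx, y, hy, hxyu⟩, r, trivial, hr⟩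
  · rintro ⟨m, ⟨x, hx, y, hy, hxym⟩, q, -, hmqz⟩
    obtain ⟨u, hxuz⟩ := sp x y q z ⟨m, hxym, hmqz⟩
    obtain ⟨w, hywu⟩ := sp y (s m) z u ⟨s x, rr _ _ _ (lr _ _ _ hxym), lr _ _ _ hxuz⟩
    exact ⟨x, hx, u, ⟨y, hy, w, trivial, hywu⟩, hxuz⟩

theorem Pasch.scomp_assoc (lr : LeftRefl R s) (rr : RightRefl R s) (hs : Function.Involutive s)
    (pa : Pasch R) (X Y Z : Set K) : scomp R X (scomp R Y Z) = scomp R (scomp R X Y) Z := by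
  ext z
  constructor
  · rintro ⟨x, hx, t, ⟨y, hy, q, hq, hyqt⟩, hxtz⟩
    obtain ⟨u, hsxuy, hzsqu⟩ := pa (s x) z (s q) y ⟨t, lr _ _ _ hxtz, rr _ _ _ hyqt⟩
    have hxyu : R x y u := by simpa only [hs x] using lr _ _ _ hsxuy
    have huqz : R u q z := by simpa only [hs q] using rr _ _ _ hzsqu
    exact ⟨u, ⟨x, hx, y, hy, hxyu⟩, q, hq, huqz⟩
  · rintro ⟨m, ⟨x, hx, y, hy, hxym⟩, q, hq, hmqz⟩
    obtain ⟨u, hxuz, hyqu⟩ := pa x y q z ⟨m, hxym, hmqz⟩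
    exact ⟨x, hx, u, ⟨y, hy, q, hq, hyqu⟩, hxuz⟩

theorem semiPasch_of_scomp_assoc_univ
    (h : ∀ X Y : Set K, scomp R X (scomp R Y Set.univ) = scomp R (scomp R X Y) Set.univ) :
    SemiPasch R := by
  rintro v w y z ⟨x, hvwx, hxyz⟩
  have hz : z ∈ scomp R (scomp R {v} {w}) Set.univ :=
    ⟨x, ⟨v, rfl, w, rfl, hvwx⟩, y, trivial, hxyz⟩
  rw [← h] at hz
  obtain ⟨_, rfl, u, -, hvuz⟩ := hz
  exact ⟨u, hvuz⟩

theorem pasch_of_scomp_assoc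
    (h : ∀ X Y Z : Set K, scomp R X (scomp R Y Z) = scomp R (scomp R X Y) Z) : Pasch R := by
  rintro v w y z ⟨x, hvwx, hxyz⟩
  have hz : z ∈ scomp R (scomp R {v} {w}) {y} := ⟨x, ⟨v, rfl, w, rfl, hvwx⟩, y, rfl, hxyz⟩
  rw [← h] at hz
  obtain ⟨_, rfl, u, ⟨_, rfl, _, rfl, hwyu⟩, hvuz⟩ := hz
  exact ⟨u, hvuz, hwyu⟩

theorem cmSA_iff_cmNA_and_semiPasch : CmSA R s I ↔ CmNA R s I ∧ SemiPasch R :=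
  ⟨fun ⟨hNA, hSA⟩ => ⟨hNA, semiPasch_of_scomp_assoc_univ hSA⟩,
    fun ⟨hNA, sp⟩ => ⟨hNA, sp.scomp_assoc_univ hNA.leftRefl hNA.rightRefl hNA.involutive⟩⟩

theorem cmRA_iff_cmNA_and_pasch : CmRA R s I ↔ CmNA R s I ∧ Pasch R :=
  ⟨fun ⟨hNA, hRA⟩ => ⟨hNA, pasch_of_scomp_assoc hRA⟩,
    fun ⟨hNA, pa⟩ => ⟨hNA, pa.scomp_assoc hNA.leftRefl hNA.rightRefl hNA.involutive⟩⟩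

end ComplexAlgebra

/-- Theorem: characterization of the frames whose complex algebras are
non-associative, semi-associative, or genuine relation algebras. -/
theorem cm_NA_SA_RA {K : Type*} (R : K → K → K → Prop) (s : K → K) (I : Set K) :
    (CmNA R s I ↔ (LeftRefl R s ∧ RightRefl R s ∧ IdentityCond R I)) ∧
    (CmSA R s I ↔ (LeftRefl R s ∧ RightRefl R s ∧ IdentityCond R I ∧ SemiPasch R)) ∧
    (CmRA R s I ↔ (LeftRefl R s ∧ RightRefl R s ∧ IdentityCond R I ∧ Pasch R)) := by
  simp only [cmSA_iff_cmNA_and_semiPasch, cmRA_iff_cmNA_and_pasch, cmNA_iff_frame, and_assoc,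
    and_self]
end

section
/- (1) If a frame 𝔎 = (K, R, ⋆, I) satisfies (identity) and (left reflection), then the predicate (reflection1) is valid in 𝔎. (2) If 𝔎 is a CR-frame in which (reflection1) is valid, then 𝔎 satisfies (left reflection). In particular, a CR-frame validates (reflection1) if and only if it satisfies (left reflection). -/
/-- `(K, R, ⋆, {z0})` is a CR-frame: postulates p1–p5 of Meyer and Routley. -/
def CRFrame {K : Type*} (R : K → K → K → Prop) (s : K → K) (z0 : K) : Prop :=
  (∀ a b : K, R z0 a b ↔ a = b) ∧
  (∀ a b c d : K, (∃ x, R a b x ∧ R x c d) ↔ (∃ y, R a c y ∧ R y b d)) ∧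
  (∀ a : K, R a a a) ∧
  (∀ a : K, s (s a) = a) ∧
  (∀ a b c : K, R a b c ↔ R a (s c) (s b))

/-- The relevance-logic predicate (reflection1),
`A∘B∧C → A∘(B∧∼D) ∨ (A∧C∘D)∘B`, is valid in the frame `(K, R, ⋆, I)`:
for all `A B C D ⊆ K`, `I ⊆ K ∖ (F⌣ ; (K ∖ G))`, where `F = (A;B) ∩ C` and
`G = ((A ∩ (K ∖ D⌣));B) ∪ (A;(B ∩ (D;C)))`. -/
def Refl1Valid {K : Type*} (R : K → K → K → Prop) (s : K → K) (I : Set K) : Prop :=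
  ∀ A B C D : Set K,
    I ⊆ (scomp R (sconv s (scomp R A B ∩ C))
          (scomp R (A ∩ (sconv s D)ᶜ) B ∪ scomp R A (B ∩ scomp R D C))ᶜ)ᶜ

/-!
For (1): applying left reflection twice to `R x u x` with `u ∈ I` shows that `⋆` is an involution,
and then one more application turns a counterexample witness `R (⋆f) g u` into `R f u g`, so
`f = g`. Writing `f ∈ A;B` via `R a b f`, either `a ∉ D⌣`, or `a = ⋆d` with `d ∈ D` and left
reflection gives `R d f b`, i.e. `b ∈ D;C`; in both cases `f ∈ G`.

For (2): instantiate (reflection1) with the singletons `A = {x}`, `B = {y}`, `C = {z}`,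
`D = {⋆x}`. Since `x ∈ D⌣`, the first disjunct of `G` is empty and the second one says exactly
`R (⋆x) z y`. The instance needs `R (⋆z) z 0`, which by p5 needs `⋆0 = 0`; that in turn comes from
a second instance of (reflection1), with `A = {0}` and `B = D = {⋆0}`.
-/

section Frame

variable {K : Type*} {R : K → K → K → Prop} {s : K → K} {I : Set K}

theorem LeftRefl.star_star (hI : IdentityCond R I) (hl : LeftRefl R s) (x : K) :
    s (s x) = x := by
  obtain ⟨u, hu, hx⟩ := (hI x x).mp rfl
  exact (hI _ _).mpr ⟨u, hu, hl _ _ _ (hl _ _ _ hx)⟩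

theorem LeftRefl.rel_of_rel_star (hI : IdentityCond R I) (hl : LeftRefl R s) {x y z : K}
    (h : R (s x) y z) : R x z y := by
  simpa only [hl.star_star hI] using hl _ _ _ h

theorem refl1Valid_of_leftRefl (hI : IdentityCond R I) (hl : LeftRefl R s) :
    Refl1Valid R s I := by
  rintro A B C D u hu ⟨_, ⟨f, ⟨⟨a, ha, b, hb, hab⟩, hfC⟩, rfl⟩, g, hg, hfg⟩
  obtain rfl : f = g := (hI f g).mpr ⟨u, hu, hl.rel_of_rel_star hI hfg⟩
  apply hg
  by_cases hD : a ∈ sconv s D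
  · obtain ⟨d, hd, rfl⟩ := hD
    exact Or.inr ⟨s d, ha, b, ⟨hb, d, hd, f, hfC, hl.rel_of_rel_star hI hab⟩, hab⟩
  · exact Or.inl ⟨a, ⟨ha, hD⟩, b, hb, hab⟩

theorem Refl1Valid.mem_of_rel (h : Refl1Valid R s I) {u : K} (hu : u ∈ I)
    {A B C D : Set K} {f g : K} (hf : f ∈ scomp R A B ∩ C) (hfg : R (s f) g u) :
    g ∈ scomp R (A ∩ (sconv s D)ᶜ) B ∪ scomp R A (B ∩ scomp R D C) := by
  by_contra hg
  exact h A B C D hu ⟨s f, ⟨f, hf, rfl⟩, g, hg, hfg⟩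

end Frame

namespace CRFrame

variable {K : Type*} {R : K → K → K → Prop} {s : K → K} {z0 : K}

theorem rel_comm (h : CRFrame R s z0) {a b c : K} (habc : R a b c) : R b a c := by
  obtain ⟨p1, p2, -⟩ := h
  obtain ⟨w, hbw, hwc⟩ := (p2 z0 a b c).mp ⟨a, (p1 a a).mpr rfl, habc⟩
  rwa [(p1 b w).mp hbw]

theorem rel_zero_right (h : CRFrame R s z0) (a b : K) : R a z0 b ↔ a = b :=
  ⟨fun hab => (h.1 a b).mp (h.rel_comm hab), fun hab => h.rel_comm ((h.1 a b).mpr hab)⟩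

theorem identityCond (h : CRFrame R s z0) : IdentityCond R {z0} := fun a b =>
  ⟨fun hab => ⟨z0, rfl, (h.rel_zero_right a b).mpr hab⟩,
    by rintro ⟨u, rfl, hab⟩; exact (h.rel_zero_right a b).mp hab⟩

theorem star_zero (h : CRFrame R s z0) (hv : Refl1Valid R s {z0}) : s z0 = z0 := by
  obtain ⟨p1, -, -, p4, -⟩ := h
  have hF : s z0 ∈ scomp R {z0} {s z0} ∩ Set.univ :=
    ⟨⟨z0, rfl, s z0, rfl, (p1 _ _).mpr rfl⟩, trivial⟩
  have hR : R (s (s z0)) z0 z0 := by rw [p4]; exact (p1 _ _).mpr rfl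
  rcases hv.mem_of_rel rfl (D := {s z0}) hF hR with
    ⟨a, ⟨ha, hD⟩, -⟩ | ⟨a, ha, b, ⟨hb, -⟩, hab⟩
  · rw [Set.mem_singleton_iff.mp ha] at hD
    exact absurd ⟨s z0, rfl, p4 z0⟩ hD
  · rw [Set.mem_singleton_iff.mp ha, p1] at hab
    rw [← Set.mem_singleton_iff.mp hb, hab]

theorem leftRefl (h : CRFrame R s z0) (hv : Refl1Valid R s {z0}) : LeftRefl R s := by
  obtain ⟨-, -, -, p4, p5⟩ := id h
  intro x y z hxyz
  have hF : z ∈ scomp R {x} {y} ∩ {z} := ⟨⟨x, rfl, y, rfl, hxyz⟩, rfl⟩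
  have hR : R (s z) z z0 := by rw [p5, h.star_zero hv, h.rel_zero_right]
  rcases hv.mem_of_rel rfl (D := {s x}) hF hR with
    ⟨a, ⟨ha, hD⟩, -⟩ | ⟨-, -, b, ⟨hb, d, hd, c, hc, hdcb⟩, -⟩
  · rw [Set.mem_singleton_iff.mp ha] at hD
    exact absurd ⟨s x, rfl, p4 x⟩ hD
  · rwa [hb, hd, hc] at hdcb

end CRFrame

/-- Theorem: (1) every frame satisfying (identity) and (left reflection)
validates (reflection1); (2) every CR-frame validating (reflection1)
satisfies (left reflection); in particular, a CR-frame validates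
(reflection1) iff it satisfies (left reflection). -/
theorem reflection1_char {K : Type*} (R : K → K → K → Prop) (s : K → K) :
    (∀ I : Set K, IdentityCond R I → LeftRefl R s → Refl1Valid R s I) ∧
    (∀ z0 : K, CRFrame R s z0 → Refl1Valid R s {z0} → LeftRefl R s) ∧
    (∀ z0 : K, CRFrame R s z0 → (Refl1Valid R s {z0} ↔ LeftRefl R s)) :=
  ⟨fun _ hI hl => refl1Valid_of_leftRefl hI hl,
    fun _ h => h.leftRefl,
    fun _ h => ⟨h.leftRefl, refl1Valid_of_leftRefl h.identityCond⟩⟩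
end

section
/- Let K be a finite set with n elements, let 0 ∈ K, and let ⋆ : K → K satisfy ⋆0 = 0 and ⋆(⋆x) = x for all x ∈ K; let s be the number of x ∈ K with ⋆x = x (so 1 ≤ s and n − s is even). Then the number of ternary relations R ⊆ K × K × K such that the frame (K, R, ⋆, {0}) satisfies (left rotation), (right rotation), (center reflection), (left reflection), (right reflection), (identity), (involution), and (comm) equals 2^{F(n,s)}, where F(n,s) = (s−1)s(s+1)/6 + (n−s)(n−s+1)(n−s+2)/12 + (s−1)(n−s)(n+2)/4; and the number of such R additionally satisfying (dense) equals 2^{G(n,s)}, where G(n,s) = (s−1)(s−2)(s+3)/6 + (n−s)(n−s−1)(n−s+4)/12 + (s−1)(n−s)(n+2)/4. -/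
/-- The conditions making `(K, R, ⋆, {z0})` a commutative NA-frame:
(left rotation), (right rotation), (center reflection), (left reflection),
(right reflection), (identity), (involution), and (comm). -/
def CommNAConds {K : Type*} (R : K → K → K → Prop) (s : K → K) (z0 : K) : Prop :=
  LeftRot R s ∧ RightRot R s ∧ CenterRefl R s ∧ LeftRefl R s ∧ RightRefl R s ∧
  (∀ x y, x = y ↔ ∃ u, u ∈ ({z0} : Set K) ∧ R x u y) ∧
  (∀ x, s (s x) = x) ∧
  (∀ x y z, R x y z ↔ R y x z)

/-!
Write `T a b c := R a b (⋆c)`. The frame conditions say exactly that `T` is invariant under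
permuting its arguments and under applying `⋆` to all of them, with `T a 0 c ↔ a = ⋆c`. Such a
`T` is forced on triples containing `0` and is otherwise an arbitrary union of `⋆`-orbits of
3-multisets of `K ∖ {0}`, so there are `2 ^ q` of them, `q` the number of orbits. For an
involution, `2 q = #Sym³ + #(fixed 3-multisets)`, and a `⋆`-fixed 3-multiset is either three fixed
points or a fixed point together with a pair `{a, ⋆a}`; with `N = n - 1` points and `t = s - 1`
fixed points in `K ∖ {0}` this gives
`12 q = N (N+1) (N+2) + t (t+1) (t+2) + 3 t (N - t) = 12 F`. Density asks exactly that the orbits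
of the multisets `{a, a, ⋆a}` be chosen; these are in bijection with the `(N + t) / 2` orbits of
`⋆` on `K ∖ {0}`, and `12 (q - (N + t) / 2) = 12 G`.
-/

open Function

theorem six_mul_choose_three (N : ℕ) : 6 * (N + 2).choose 3 = N * (N + 1) * (N + 2) := by
  rw [show 6 = Nat.factorial 3 from rfl, ← Nat.descFactorial_eq_factorial_mul_choose]
  simp [Nat.descFactorial_succ]
  ring

theorem Nat.card_set {α : Type*} [Finite α] : Nat.card (Set α) = 2 ^ Nat.card α := by
  rw [Set, Nat.card_fun, Nat.card_eq_fintype_card (α := Prop), Fintype.card_prop]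

theorem Nat.card_subtype_ne_add_one {α : Type*} [Finite α] (a : α) :
    Nat.card {x // x ≠ a} + 1 = Nat.card α := by
  classical
  rw [← Finite.card_option, Nat.card_congr (Equiv.optionSubtypeNe a)]

theorem Nat.card_subtype_add_card_subtype_not {α : Type*} [Finite α] (p : α → Prop) :
    Nat.card {x // p x} + Nat.card {x // ¬p x} = Nat.card α := by
  classical
  rw [← Nat.card_sum, Nat.card_congr (Equiv.sumCompl p)]

theorem Set.card_supersets {α : Type*} [Finite α] (T : Set α) :
    Nat.card {D : Set α | T ⊆ D} = 2 ^ (Nat.card α - Nat.card T) := by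
  have e : {D : Set α | T ⊆ D} ≃ 𝒫 Tᶜ :=
    (compl_involutive.toPerm _).subtypeEquiv fun D => Set.compl_subset_compl.symm
  rw [Nat.card_congr (e.trans (Equiv.Set.powerset _)), Nat.card_set, Nat.card_coe_set_eq,
    Set.ncard_compl, Nat.card_coe_set_eq]

theorem Multiset.pair_eq_pair_iff {α : Type*} {a b c d : α} :
    ({a, b} : Multiset α) = {c, d} ↔ a = c ∧ b = d ∨ a = d ∧ b = c := by
  refine ⟨fun h => ?_, by rintro (⟨rfl, rfl⟩ | ⟨rfl, rfl⟩); exacts [rfl, Multiset.pair_comm _ _]⟩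
  simpa [List.permutations, List.permutationsAux, List.permutationsAux.rec] using
    List.mem_permutations.2 (Multiset.coe_eq_coe.1 h)

theorem rel_of_triple_eq {α : Type*} {T : α → α → α → Prop}
    (swap : ∀ {a b c}, T a b c → T b a c) (rotate : ∀ {a b c}, T a b c → T b c a)
    {x y z x' y' z' : α} (h : ({x, y, z} : Multiset α) = {x', y', z'}) (hT : T x y z) :
    T x' y' z' := by
  have := List.mem_permutations.2 (Multiset.coe_eq_coe.1 h.symm)
  simp [List.permutations, List.permutationsAux, List.permutationsAux.rec] at this
  rcases this with ⟨rfl, rfl, rfl⟩ | ⟨rfl, rfl, rfl⟩ | ⟨rfl, rfl, rfl⟩ | ⟨rfl, rfl, rfl⟩ |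
    ⟨rfl, rfl, rfl⟩ | ⟨rfl, rfl, rfl⟩
  exacts [hT, swap hT, swap (rotate hT), rotate hT, rotate (rotate hT), swap (rotate (rotate hT))]

namespace Function.Involutive

variable {α : Type*} {f : α → α}

def orbitSetoid (hf : Involutive f) : Setoid α where
  r a b := a = b ∨ a = f b
  iseqv := by
    refine ⟨fun a => Or.inl rfl, ?_, ?_⟩
    · rintro a b (rfl | rfl)
      exacts [Or.inl rfl, Or.inr (hf b).symm]
    · rintro a b c (rfl | rfl) (rfl | rfl)
      exacts [Or.inl rfl, Or.inr rfl, Or.inr rfl, Or.inl (hf c)]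

theorem mk_eq_mk_iff (hf : Involutive f) {a b : α} :
    (⟦a⟧ : Quotient hf.orbitSetoid) = ⟦b⟧ ↔ a = b ∨ a = f b :=
  Quotient.eq

theorem subtypeMap (hf : Involutive f) {p : α → Prop} (h : ∀ a, p a → p (f a)) :
    Involutive (Subtype.map f h) :=
  fun a => Subtype.ext (hf a)

theorem symMap (hf : Involutive f) (n : ℕ) : Involutive (Sym.map f : Sym α n → Sym α n) :=
  fun m => by rw [Sym.map_map, hf.comp_self, Sym.map_id]

theorem map_ne_self (hf : Involutive f) (a : α) (ha : f a ≠ a) : f (f a) ≠ f a :=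
  fun h => ha ((hf a).symm.trans h).symm

theorem card_orbit_add_card_fixed_orbit (hf : Involutive f) (b : α) :
    Nat.card {a // (⟦a⟧ : Quotient hf.orbitSetoid) = ⟦b⟧} +
      Nat.card {a : {a // f a = a} // (⟦a.1⟧ : Quotient hf.orbitSetoid) = ⟦b⟧} = 2 := by
  simp only [hf.mk_eq_mk_iff]
  by_cases hb : f b = b
  · have : Nat.card {a : {a // f a = a} // a.1 = b} = 1 :=
      Nat.card_eq_one_iff_unique.2
        ⟨⟨fun x y => Subtype.ext (Subtype.ext (x.2.trans y.2.symm))⟩, ⟨⟨⟨b, hb⟩, rfl⟩⟩⟩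
    simp only [hb, or_self, Nat.card_unique, this]
  · have : IsEmpty {a : {a // f a = a} // a.1 = b ∨ a.1 = f b} := by
      refine ⟨fun ⟨⟨a, ha⟩, h⟩ => hb ?_⟩
      rcases h with rfl | rfl
      exacts [ha, ((hf b).symm.trans ha).symm]
    rw [Nat.card_of_isEmpty (α := {a : {a // f a = a} // _}), add_zero]
    exact (Set.ncard_pair (Ne.symm hb) : Nat.card ↥({b, f b} : Set α) = 2)

theorem two_mul_card_quotient (hf : Involutive f) [Finite α] :
    2 * Nat.card (Quotient hf.orbitSetoid) = Nat.card α + Nat.card {a // f a = a} := by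
  have := Fintype.ofFinite α
  classical
  have fiber : ∀ q : Quotient hf.orbitSetoid,
      Nat.card {a // ⟦a⟧ = q} + Nat.card {a : {a // f a = a} // ⟦a.1⟧ = q} = 2 :=
    Quotient.ind hf.card_orbit_add_card_fixed_orbit
  rw [← Nat.card_congr (Equiv.sigmaFiberEquiv (Quotient.mk hf.orbitSetoid)),
    ← Nat.card_congr (Equiv.sigmaFiberEquiv
      (fun a : {a // f a = a} => (⟦a.1⟧ : Quotient hf.orbitSetoid))),
    Nat.card_sigma, Nat.card_sigma, ← Finset.sum_add_distrib,
    Finset.sum_congr rfl fun q _ => fiber q]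
  simp [mul_comm]

abbrev NonfixedOrbits (hf : Involutive f) : Type _ :=
  Quotient (hf.subtypeMap (p := fun a => f a ≠ a) hf.map_ne_self).orbitSetoid

theorem two_mul_card_nonfixedOrbits (hf : Involutive f) [Finite α] :
    2 * Nat.card hf.NonfixedOrbits = Nat.card {a // f a ≠ a} := by
  have : IsEmpty {a : {a // f a ≠ a} // Subtype.map f hf.map_ne_self a = a} :=
    ⟨fun a => a.1.2 (congrArg Subtype.val a.2)⟩
  rw [two_mul_card_quotient, Nat.card_of_isEmpty (α := {a : {a // f a ≠ a} // _ = a}), add_zero]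

theorem exists_eq_pair_add_fixed (hf : Involutive f) {m : Multiset α}
    (hm : Multiset.card m = 3) (hfm : m.map f = m) {d : α} (hd : d ∈ m) (hfd : f d ≠ d) :
    ∃ x, f x = x ∧ m = {d, f d, x} := by
  classical
  have hfd_mem : f d ∈ m.erase d :=
    (Multiset.mem_erase_of_ne hfd).2 (hfm ▸ Multiset.mem_map_of_mem f hd)
  obtain ⟨x, hx⟩ := Multiset.card_eq_one.1 (show Multiset.card ((m.erase d).erase (f d)) = 1 by
    simp [Multiset.card_erase_of_mem, hd, hfd_mem, hm])
  have hm' : m = {d, f d, x} := by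
    rw [← Multiset.cons_erase hd, ← Multiset.cons_erase hfd_mem, hx]; rfl
  refine ⟨x, ?_, hm'⟩
  rw [hm'] at hfm
  simpa [hf d, Multiset.cons_swap (f d) d] using hfm

/-- An `f`-invariant 3-multiset consists of three fixed points, or of a fixed point `x` and an
orbit `{a, f a}` of size two. -/
def fixedSymThree (hf : Involutive f) :
    Sym {a // f a = a} 3 ⊕ {a // f a = a} × hf.NonfixedOrbits → {m : Sym α 3 // m.map f = m} :=
  Sum.elim
    (fun m => ⟨m.map Subtype.val, by rw [Sym.map_map]; exact Sym.map_congr fun x _ => x.2⟩)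
    fun p => Quotient.lift
      (fun a => ⟨a.1 ::ₛ f a.1 ::ₛ p.1.1 ::ₛ .nil, by
        rw [Sym.map_cons, Sym.map_cons, Sym.map_cons, hf, p.1.2, Sym.cons_swap]; rfl⟩)
      (by
        rintro a b (rfl | rfl)
        · rfl
        · exact Subtype.ext (by simp only [Subtype.map, hf b.1, Sym.cons_swap]))
      p.2

theorem fixedSymThree_injective (hf : Involutive f) : Injective hf.fixedSymThree := by
  have inl_ne_inr : ∀ m x a, hf.fixedSymThree (.inl m) ≠ hf.fixedSymThree (.inr (x, ⟦a⟧)) := by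
    intro m x a h
    have h : Sym.map Subtype.val m = a.1 ::ₛ f a.1 ::ₛ x.1 ::ₛ .nil := congrArg Subtype.val h
    obtain ⟨y, -, hy⟩ := Sym.mem_map.1 (h ▸ Sym.mem_cons_self a.1 _)
    exact a.2 (hy ▸ y.2)
  rintro (m | ⟨x, q⟩) (m' | ⟨x', q'⟩) h
  · exact congrArg Sum.inl (Sym.map_injective Subtype.val_injective _ (congrArg Subtype.val h))
  · induction q' using Quotient.ind
    exact absurd h (inl_ne_inr _ _ _)
  · induction q using Quotient.ind
    exact absurd h.symm (inl_ne_inr _ _ _)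
  induction q using Quotient.ind with | _ a => ?_
  induction q' using Quotient.ind with | _ a' => ?_
  have h : ({a.1, f a.1, x.1} : Multiset α) = {a'.1, f a'.1, x'.1} :=
    congrArg (fun m : {m : Sym α 3 // m.map f = m} => (m.1 : Multiset α)) h
  have mem_iff : ∀ b, b ∈ ({a.1, f a.1, x.1} : Multiset α) ↔
      b = a'.1 ∨ b = f a'.1 ∨ b = x'.1 := fun b => by
    rw [h]
    simp
  obtain rfl : x = x' := by
    rcases (mem_iff x.1).1 (by simp) with hx | hx | hx
    · exact absurd (hx ▸ x.2) a'.2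
    · exact absurd (by rw [← hx, x.2, hx]) (hf.map_ne_self _ a'.2)
    · exact Subtype.ext hx
  have ha : a = a' ∨ a = Subtype.map f hf.map_ne_self a' := by
    rcases (mem_iff a.1).1 (by simp) with ha | ha | ha
    · exact Or.inl (Subtype.ext ha)
    · exact Or.inr (Subtype.ext ha)
    · exact absurd (ha ▸ x.2) a.2
  rw [(mk_eq_mk_iff _).2 ha]

theorem fixedSymThree_surjective (hf : Involutive f) : Surjective hf.fixedSymThree := by
  rintro ⟨m, hm⟩
  by_cases hfix : ∀ a ∈ m, f a = a
  · refine ⟨.inl (m.attach.map fun a => ⟨a.1, hfix a.1 a.2⟩), Subtype.ext ?_⟩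
    change Sym.map Subtype.val (Sym.map _ m.attach) = m
    rw [Sym.map_map]
    exact m.attach_map_coe
  · push Not at hfix
    obtain ⟨d, hd, hfd⟩ := hfix
    obtain ⟨x, hx, hmx⟩ :=
      hf.exists_eq_pair_add_fixed (m := (m : Multiset α)) m.2 (by rw [← Sym.coe_map, hm]) hd hfd
    exact ⟨.inr (⟨x, hx⟩, ⟦⟨d, hfd⟩⟧), Subtype.ext (Sym.coe_injective hmx.symm)⟩

theorem card_fixed_symThree (hf : Involutive f) [Finite α] :
    Nat.card {m : Sym α 3 // m.map f = m} =
      (Nat.card {a // f a = a} + 2).choose 3 +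
        Nat.card {a // f a = a} * Nat.card hf.NonfixedOrbits := by
  classical
  have := Fintype.ofFinite α
  rw [← Nat.card_eq_of_bijective _ ⟨hf.fixedSymThree_injective, hf.fixedSymThree_surjective⟩,
    Nat.card_sum, Nat.card_prod, Nat.card_eq_fintype_card (α := Sym _ 3), Sym.card_sym_eq_choose,
    Nat.card_eq_fintype_card]
  rfl

theorem twelve_mul_card_symThree_quotient (hf : Involutive f) [Finite α] :
    12 * Nat.card (Quotient (hf.symMap 3).orbitSetoid) =
      Nat.card α * (Nat.card α + 1) * (Nat.card α + 2) +
        Nat.card {a // f a = a} * (Nat.card {a // f a = a} + 1) * (Nat.card {a // f a = a} + 2) +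
        3 * Nat.card {a // f a = a} * Nat.card {a // f a ≠ a} := by
  have := Fintype.ofFinite α
  classical
  have hsym : Nat.card (Sym α 3) = (Nat.card α + 2).choose 3 := by
    rw [Nat.card_eq_fintype_card, Sym.card_sym_eq_choose, Nat.card_eq_fintype_card]
    rfl
  have h := (hf.symMap 3).two_mul_card_quotient
  rw [hsym, hf.card_fixed_symThree] at h
  rw [← six_mul_choose_three, ← six_mul_choose_three, ← hf.two_mul_card_nonfixedOrbits]
  linarith

end Function.Involutive

section Twist

variable {K : Type*} {z0 : K} {s : K → K}

/-- The conditions on `T a b c = R a b (s c)` that make `(K, R, s, {z0})` a commutative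
NA-frame (`commNAConds_iff`). -/
structure IsCommNATwist (s : K → K) (z0 : K) (T : K → K → K → Prop) : Prop where
  swap : ∀ {a b c}, T a b c → T b a c
  rotate : ∀ {a b c}, T a b c → T b c a
  star : ∀ {a b c}, T a b c → T (s a) (s b) (s c)
  unit : ∀ a c, T a z0 c ↔ a = s c

theorem commNAConds_iff (hinv : Involutive s) {R : K → K → K → Prop} :
    CommNAConds R s z0 ↔ IsCommNATwist s z0 fun a b c => R a b (s c) := by
  constructor
  · rintro ⟨leftRot, -, centerRefl, -, -, identity, -, comm⟩
    refine ⟨(comm _ _ _).1, fun h => ?_, fun h => (comm _ _ _).1 (centerRefl _ _ _ h),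
      fun a c => ?_⟩
    · simpa only [hinv _] using leftRot _ _ _ h
    · rw [identity]
      simp
  · intro hT
    have hR : ∀ {x y z}, R x y z ↔ R x y (s (s z)) := by simp only [hinv _, implies_true]
    have star : ∀ {x y z}, R x y z → R (s x) (s y) (s z) := fun h => by
      simpa only [hinv _] using hT.star (hR.1 h)
    refine ⟨fun x y z h => hT.rotate (hR.1 h), fun x y z h => hT.rotate (hT.rotate (hR.1 h)),
      fun x y z h => hT.swap (star h),
      fun x y z h => hR.2 (hT.swap (hT.rotate (hT.rotate (star h)))),
      fun x y z h => hR.2 (hT.rotate (hT.rotate (hT.swap (star h)))), fun x y => ?_, hinv,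
      fun x y z => ⟨fun h => hR.2 (hT.swap (hR.1 h)), fun h => hR.2 (hT.swap (hR.1 h))⟩⟩
    simpa [hinv _] using (hT.unit x (s y)).symm

namespace IsCommNATwist

variable {T : K → K → K → Prop}

theorem unit_left (hT : IsCommNATwist s z0 T) (b c : K) : T z0 b c ↔ b = s c :=
  ⟨fun h => (hT.unit b c).1 (hT.swap h), fun h => hT.swap ((hT.unit b c).2 h)⟩

theorem unit_right (hT : IsCommNATwist s z0 T) (hinv : Involutive s) (a b : K) :
    T a b z0 ↔ a = s b := by
  refine ⟨fun h => hinv.eq_iff.1 ((hT.unit b a).1 (hT.rotate h)).symm, fun h => ?_⟩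
  exact hT.rotate (hT.rotate ((hT.unit b a).2 (hinv.eq_iff.2 h).symm))

theorem eq_of_forall_ne {T' : K → K → K → Prop} (hT : IsCommNATwist s z0 T)
    (hT' : IsCommNATwist s z0 T') (hinv : Involutive s)
    (h : ∀ a b c, a ≠ z0 → b ≠ z0 → c ≠ z0 → (T a b c ↔ T' a b c)) : T = T' := by
  funext a b c
  apply propext
  by_cases ha : a = z0
  · rw [ha, hT.unit_left, hT'.unit_left]
  by_cases hb : b = z0
  · rw [hb, hT.unit, hT'.unit]
  by_cases hc : c = z0
  · rw [hc, hT.unit_right hinv, hT'.unit_right hinv]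
  exact h a b c ha hb hc

end IsCommNATwist

end Twist

section Punctured

variable {K : Type*} {z0 : K} {s : K → K} (hz : s z0 = z0) (hinv : Involutive s)

def puncturedStar : {x // x ≠ z0} → {x // x ≠ z0} :=
  Subtype.map s fun _ hx => hz ▸ hinv.injective.ne hx

theorem puncturedStar_involutive : Involutive (puncturedStar hz hinv) :=
  hinv.subtypeMap _

abbrev TripleOrbits : Type _ :=
  Quotient ((puncturedStar_involutive hz hinv).symMap 3).orbitSetoid

/-- The twisted relation with prescribed orbits `D`, as a predicate on 3-multisets: away from
`z0` it holds on the orbits in `D`, and on multisets containing `z0` it is forced by the unit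
condition. -/
def twistOf (D : Set (TripleOrbits hz hinv)) (M : Multiset K) : Prop :=
  (∃ m : Sym {x // x ≠ z0} 3, ⟦m⟧ ∈ D ∧ (m : Multiset {x // x ≠ z0}).map Subtype.val = M) ∨
    ∃ x, M = {z0, x, s x}

def frameOf (D : Set (TripleOrbits hz hinv)) (x y z : K) : Prop :=
  twistOf hz hinv D {x, y, s z}

def diagOrbit : Quotient (puncturedStar_involutive hz hinv).orbitSetoid → TripleOrbits hz hinv :=
  Quotient.lift (fun a => ⟦a ::ₛ a ::ₛ puncturedStar hz hinv a ::ₛ .nil⟧) <| by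
    rintro a b (rfl | rfl)
    · rfl
    · refine (Involutive.mk_eq_mk_iff _).2 (Or.inr ?_)
      rw [Sym.map_cons, Sym.map_cons, Sym.map_cons, puncturedStar_involutive hz hinv b]
      rfl

variable {hz hinv}

theorem not_mem_map_val (m : Multiset {x // x ≠ z0}) : z0 ∉ m.map Subtype.val := fun h => by
  obtain ⟨y, -, hy⟩ := Multiset.mem_map.1 h
  exact y.2 hy

theorem map_val_symMap_puncturedStar (m : Sym {x // x ≠ z0} 3) :
    ((Sym.map (puncturedStar hz hinv) m : Sym _ 3) : Multiset {x // x ≠ z0}).map Subtype.val =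
      ((m : Multiset {x // x ≠ z0}).map Subtype.val).map s := by
  rw [Sym.coe_map, Multiset.map_map, Multiset.map_map]
  rfl

theorem twistOf_map_val_iff {D : Set (TripleOrbits hz hinv)} (m : Sym {x // x ≠ z0} 3) :
    twistOf hz hinv D ((m : Multiset {x // x ≠ z0}).map Subtype.val) ↔ ⟦m⟧ ∈ D := by
  refine ⟨?_, fun h => Or.inl ⟨m, h, rfl⟩⟩
  rintro (⟨m', hm'D, hm'⟩ | ⟨x, hx⟩)
  · rwa [Sym.coe_injective (Multiset.map_injective Subtype.val_injective hm')] at hm'D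
  · exact (not_mem_map_val _ (by rw [hx]; exact Multiset.mem_cons_self _ _)).elim

theorem isCommNATwist_twistOf (D : Set (TripleOrbits hz hinv)) :
    IsCommNATwist s z0 fun a b c => twistOf hz hinv D {a, b, c} := by
  have swap : ∀ {a b c : K}, ({a, b, c} : Multiset K) = {b, a, c} := Multiset.cons_swap _ _ _
  have rotate : ∀ {a b c : K}, ({a, b, c} : Multiset K) = {b, c, a} := by
    intro a b c
    rw [swap]
    exact congrArg _ (Multiset.cons_swap _ _ _)
  refine ⟨fun h => swap ▸ h, fun h => rotate ▸ h, ?_, fun a c => ?_⟩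
  · rintro a b c (⟨m, hmD, hm⟩ | ⟨x, hx⟩)
    · refine Or.inl ⟨Sym.map (puncturedStar hz hinv) m, ?_, ?_⟩
      · rwa [(Involutive.mk_eq_mk_iff _).2 (Or.inr rfl)]
      · rw [map_val_symMap_puncturedStar, hm]
        simp
    · refine Or.inr ⟨s x, ?_⟩
      simpa [hz] using congrArg (Multiset.map s) hx
  · rw [show ({a, z0, c} : Multiset K) = z0 ::ₘ {a, c} from Multiset.cons_swap _ _ _, twistOf]
    constructor
    · rintro (⟨m, -, hm⟩ | ⟨x, hx⟩)
      · exact (not_mem_map_val _ (by rw [hm]; exact Multiset.mem_cons_self _ _)).elim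
      · rcases Multiset.pair_eq_pair_iff.1 ((Multiset.cons_inj_right _).1 hx) with
          ⟨rfl, rfl⟩ | ⟨rfl, rfl⟩
        exacts [(hinv a).symm, rfl]
    · rintro rfl
      exact Or.inr ⟨c, congrArg _ (Multiset.pair_comm _ _)⟩

theorem exists_twistOf_eq {T : K → K → K → Prop} (hT : IsCommNATwist s z0 T) :
    ∃ D, (fun a b c => twistOf hz hinv D {a, b, c}) = T := by
  let P : Multiset K → Prop := fun M => ∃ a b c, M = {a, b, c} ∧ T a b c
  have hP : ∀ {a b c}, P {a, b, c} ↔ T a b c := fun {a b c} =>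
    ⟨fun ⟨_, _, _, h, habc⟩ => rel_of_triple_eq @hT.swap @hT.rotate h.symm habc,
      fun h => ⟨a, b, c, rfl, h⟩⟩
  have hP_map : ∀ {M}, P M → P (M.map s) := fun ⟨a, b, c, hM, habc⟩ =>
    ⟨s a, s b, s c, by rw [hM]; simp, hT.star habc⟩
  have hP_map_iff : ∀ {M}, P (M.map s) ↔ P M := fun {M} =>
    ⟨fun h => by simpa only [Multiset.map_map, hinv.comp_self, Multiset.map_id] using hP_map h,
      hP_map⟩
  refine ⟨{q : TripleOrbits hz hinv |
    Quotient.lift (fun m : Sym _ 3 => P ((m : Multiset {x // x ≠ z0}).map Subtype.val)) ?_ q}, ?_⟩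
  · rintro m m' (rfl | rfl)
    · rfl
    · exact propext (by rw [map_val_symMap_puncturedStar, hP_map_iff])
  refine (isCommNATwist_twistOf _).eq_of_forall_ne hT hinv fun a b c ha hb hc => ?_
  exact (twistOf_map_val_iff (⟨a, ha⟩ ::ₛ ⟨b, hb⟩ ::ₛ ⟨c, hc⟩ ::ₛ .nil)).trans hP

theorem frameOf_injective : Injective (frameOf hz hinv) := by
  intro D D' h
  ext q
  induction q using Quotient.ind with | _ m => ?_
  obtain ⟨a, b, c, hm⟩ := Multiset.card_eq_three.1
    (show Multiset.card ((m : Multiset {x // x ≠ z0}).map Subtype.val) = 3 by simp)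
  have := congrFun (congrFun (congrFun h a) b) (s c)
  simp only [frameOf, hinv c] at this
  rw [← twistOf_map_val_iff, ← twistOf_map_val_iff, hm, this]

theorem commNAConds_iff_exists_frameOf {R : K → K → K → Prop} :
    CommNAConds R s z0 ↔ ∃ D, frameOf hz hinv D = R := by
  rw [commNAConds_iff hinv]
  constructor
  · intro hT
    obtain ⟨D, hD⟩ := exists_twistOf_eq (hz := hz) hT
    refine ⟨D, funext fun x => funext fun y => funext fun z => ?_⟩
    simpa [frameOf, hinv z] using congrFun (congrFun (congrFun hD x) y) (s z)
  · rintro ⟨D, rfl⟩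
    simpa only [frameOf, hinv _] using isCommNATwist_twistOf D

theorem diagOrbit_injective : Injective (diagOrbit hz hinv) := by
  intro q q' h
  induction q using Quotient.ind with | _ a => ?_
  induction q' using Quotient.ind with | _ b => ?_
  refine (Involutive.mk_eq_mk_iff _).2 ?_
  have ha : a ∈ (a ::ₛ a ::ₛ puncturedStar hz hinv a ::ₛ .nil) := Sym.mem_cons_self _ _
  rcases (Involutive.mk_eq_mk_iff _).1 h with h | h <;> rw [h] at ha
  · simp only [Sym.mem_cons, Sym.notMem_nil, or_false] at ha
    tauto
  · simp only [Sym.map_cons, Sym.mem_cons, Sym.mem_map, Sym.notMem_nil, false_and, exists_false,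
      or_false, puncturedStar_involutive hz hinv b] at ha
    tauto

theorem forall_frameOf_self_iff {D : Set (TripleOrbits hz hinv)} :
    (∀ x, frameOf hz hinv D x x x) ↔ Set.range (diagOrbit hz hinv) ⊆ D := by
  constructor
  · rintro h _ ⟨q, rfl⟩
    induction q using Quotient.ind with | _ a => ?_
    exact (twistOf_map_val_iff (a ::ₛ a ::ₛ puncturedStar hz hinv a ::ₛ .nil)).1 (h a.1)
  · intro h x
    by_cases hx : x = z0
    · subst hx
      exact ((isCommNATwist_twistOf D).unit_left _ _).2 (hinv _).symm
    · exact (twistOf_map_val_iff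
        (⟨x, hx⟩ ::ₛ ⟨x, hx⟩ ::ₛ puncturedStar hz hinv ⟨x, hx⟩ ::ₛ .nil)).2 (h ⟨⟦⟨x, hx⟩⟧, rfl⟩)

variable (hz hinv) [Finite K]

theorem card_commNAConds :
    Nat.card {R // CommNAConds R s z0} = 2 ^ Nat.card (TripleOrbits hz hinv) := by
  simp_rw [commNAConds_iff_exists_frameOf (hz := hz) (hinv := hinv)]
  rw [show {R // ∃ D, frameOf hz hinv D = R} = Set.range (frameOf hz hinv) from rfl,
    Nat.card_range_of_injective frameOf_injective, Nat.card_set]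

theorem card_commNAConds_dense :
    Nat.card {R // CommNAConds R s z0 ∧ ∀ x, R x x x} =
      2 ^ (Nat.card (TripleOrbits hz hinv) -
        Nat.card (Quotient (puncturedStar_involutive hz hinv).orbitSetoid)) := by
  have : ∀ R, (CommNAConds R s z0 ∧ ∀ x, R x x x) ↔
      R ∈ frameOf hz hinv '' {D | Set.range (diagOrbit hz hinv) ⊆ D} := by
    intro R
    rw [commNAConds_iff_exists_frameOf (hz := hz) (hinv := hinv)]
    constructor
    · rintro ⟨⟨D, rfl⟩, hdense⟩
      exact ⟨D, forall_frameOf_self_iff.1 hdense, rfl⟩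
    · rintro ⟨D, hD, rfl⟩
      exact ⟨⟨D, rfl⟩, forall_frameOf_self_iff.2 hD⟩
  simp_rw [this]
  rw [Nat.card_image_of_injective frameOf_injective, Set.card_supersets,
    Nat.card_range_of_injective diagOrbit_injective]

theorem card_fixed_puncturedStar_add_one :
    Nat.card {a // puncturedStar hz hinv a = a} + 1 = Nat.card {x // s x = x} := by
  rw [← Nat.card_subtype_ne_add_one (⟨z0, hz⟩ : {x // s x = x})]
  congr 1
  exact Nat.card_congr
    { toFun a := ⟨⟨a.1.1, congrArg Subtype.val a.2⟩, fun h => a.1.2 (congrArg Subtype.val h)⟩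
      invFun y := ⟨⟨y.1.1, fun h => y.2 (Subtype.ext h)⟩, Subtype.ext y.1.2⟩ }

end Punctured

theorem twelve_mul_exponent_F {n sk t m : ℕ} (hn : n = t + m + 1) (hsk : sk = t + 1) :
    2 * ((sk - 1) * sk * (sk + 1)) + (n - sk) * (n - sk + 1) * (n - sk + 2) +
        3 * ((sk - 1) * (n - sk) * (n + 2)) =
      (t + m) * (t + m + 1) * (t + m + 2) + t * (t + 1) * (t + 2) + 3 * t * m := by
  subst hn hsk
  simp only [Nat.add_sub_cancel, Nat.add_sub_add_right, Nat.add_sub_cancel_left]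
  ring

theorem twelve_mul_exponent_G {n sk t m : ℕ} (hn : n = t + m + 1) (hsk : sk = t + 1) :
    2 * ((sk - 1) * (sk - 2) * (sk + 3)) + (n - sk) * (n - sk - 1) * (n - sk + 4) +
        3 * ((sk - 1) * (n - sk) * (n + 2)) + 6 * (t + m + t) =
      (t + m) * (t + m + 1) * (t + m + 2) + t * (t + 1) * (t + 2) + 3 * t * m := by
  subst hn hsk
  simp only [Nat.add_sub_cancel, Nat.add_sub_add_right, Nat.add_sub_cancel_left]
  rcases t with _ | t <;> rcases m with _ | m <;> simp <;> ring

/-- Theorem 27(i), commutative cases: on an `n`-element set `K` with base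
point `0`, an involution `⋆` fixing `0`, and `s` elements fixed by `⋆`, the
number of ternary relations `R` making `(K, R, ⋆, {0})` a commutative NA-frame
is `2^F(n,s)` with `F(n,s) = (s−1)s(s+1)/6 + (n−s)(n−s+1)(n−s+2)/12 +
(s−1)(n−s)(n+2)/4`, and the number making it also dense is `2^G(n,s)` with
`G(n,s) = (s−1)(s−2)(s+3)/6 + (n−s)(n−s−1)(n−s+4)/12 + (s−1)(n−s)(n+2)/4`
(the exponents being characterized here by `12·F` and `12·G`). -/
theorem count_comm_NA_frames {K : Type*} [Fintype K] (z0 : K) (s : K → K)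
    (hz : s z0 = z0) (hinv : ∀ x, s (s x) = x)
    (n sk : ℕ) (hn : Fintype.card K = n)
    (hsk : Nat.card {x : K // s x = x} = sk)
    (F G : ℕ)
    (hF : 12 * F = 2 * ((sk - 1) * sk * (sk + 1)) +
      (n - sk) * (n - sk + 1) * (n - sk + 2) +
      3 * ((sk - 1) * (n - sk) * (n + 2)))
    (hG : 12 * G = 2 * ((sk - 1) * (sk - 2) * (sk + 3)) +
      (n - sk) * (n - sk - 1) * (n - sk + 4) +
      3 * ((sk - 1) * (n - sk) * (n + 2))) :
    Nat.card {R : K → K → K → Prop // CommNAConds R s z0} = 2 ^ F ∧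
    Nat.card {R : K → K → K → Prop //
        CommNAConds R s z0 ∧ ∀ x, R x x x} = 2 ^ G := by
  have hσ := puncturedStar_involutive hz hinv
  have hn' : n = Nat.card {a // puncturedStar hz hinv a = a} +
      Nat.card {a // puncturedStar hz hinv a ≠ a} + 1 := by
    rw [← hn, ← Nat.card_eq_fintype_card, ← Nat.card_subtype_ne_add_one z0,
      Nat.card_subtype_add_card_subtype_not]
  have hsk' := (card_fixed_puncturedStar_add_one hz hinv).trans hsk
  have hQ := hσ.twelve_mul_card_symThree_quotient
  have hP := hσ.two_mul_card_quotient
  rw [← Nat.card_subtype_add_card_subtype_not (fun a => puncturedStar hz hinv a = a)] at hQ hP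
  have hF' := twelve_mul_exponent_F hn' hsk'.symm
  have hG' := twelve_mul_exponent_G hn' hsk'.symm
  rw [card_commNAConds hz hinv, card_commNAConds_dense hz hinv]
  constructor <;> congr 1
  · have : 12 * F = 12 * Nat.card (TripleOrbits hz hinv) := by linarith
    omega
  · have : 12 * G + 12 * Nat.card (Quotient hσ.orbitSetoid) =
        12 * Nat.card (TripleOrbits hz hinv) := by
      linarith
    omega
end

section
/- Let K be a finite set with n elements and let 0 ∈ K. Then the number of ternary relations R ⊆ K × K × K such that the frame (K, R, id, {0}) (where ⋆ is the identity map on K) satisfies (left rotation), (right rotation), (center reflection), (left reflection), (right reflection), (identity), and (involution) equals 2^{(n−1)n(n+1)/6}; and the number of such R additionally satisfying (dense) equals 2^{(n−1)(n−2)(n+3)/6}. -/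
/-- The conditions making `(K, R, ⋆, {z0})` an NA-frame: (left rotation),
(right rotation), (center reflection), (left reflection), (right reflection),
(identity), and (involution). -/
def NAConds {K : Type*} (R : K → K → K → Prop) (s : K → K) (z0 : K) : Prop :=
  LeftRot R s ∧ RightRot R s ∧ CenterRefl R s ∧ LeftRefl R s ∧ RightRefl R s ∧
  (∀ x y, x = y ↔ ∃ u, u ∈ ({z0} : Set K) ∧ R x u y) ∧
  (∀ x, s (s x) = x)

/-!
With `⋆ = id`, the rotation and reflection conditions say exactly that `R` is invariant under
all permutations of its arguments, and (identity) says that `z0` is a unit: `R x z0 y ↔ x = y`.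
By symmetry, the value of `R` on any triple through `z0` is then forced, so `R` amounts to an
arbitrary totally symmetric relation on `K ∖ {z0}`, that is, an arbitrary predicate on the
`(n + 1).choose 3` multisets of size three over the remaining `n - 1` points. Density prescribes
the value on the `n - 1` constant multisets and leaves the others free.
-/

open Function

section SymmTernary

variable {α : Type*}

structure IsSymmTernary (S : α → α → α → Prop) : Prop where
  swap_left : ∀ x y z, S x y z → S y x z
  swap_right : ∀ x y z, S x y z → S x z y

lemma Sym.exists_cons_cons_cons_eq (s : Sym α 3) : ∃ a b c, a ::ₛ b ::ₛ c ::ₛ Sym.nil = s := by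
  obtain ⟨a, s, rfl⟩ := s.exists_eq_cons_of_succ
  obtain ⟨b, s, rfl⟩ := s.exists_eq_cons_of_succ
  obtain ⟨c, s, rfl⟩ := s.exists_eq_cons_of_succ
  exact ⟨a, b, c, by rw [Sym.eq_nil_of_card_zero s]⟩

lemma Sym.cons_cons_cons_eq_iff {a b c a' b' c' : α} :
    a' ::ₛ b' ::ₛ c' ::ₛ Sym.nil = a ::ₛ b ::ₛ c ::ₛ Sym.nil ↔ [a', b', c'].Perm [a, b, c] := by
  rw [← Multiset.coe_eq_coe, ← Sym.coe_inj]
  rfl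

lemma IsSymmTernary.of_cons_cons_cons_eq {S : α → α → α → Prop} (hS : IsSymmTernary S)
    {a b c a' b' c' : α} (h : a' ::ₛ b' ::ₛ c' ::ₛ Sym.nil = a ::ₛ b ::ₛ c ::ₛ Sym.nil)
    (h' : S a' b' c') : S a b c := by
  rw [Sym.cons_cons_cons_eq_iff, ← List.mem_permutations'] at h
  simp only [List.permutations', List.permutations'Aux, List.flatMap_cons, List.flatMap_nil,
    List.append_nil, List.map_cons, List.map_nil, List.cons_append, List.nil_append,
    List.mem_cons, List.cons.injEq, and_true, List.not_mem_nil, or_false] at h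
  rcases h with ⟨rfl, rfl, rfl⟩ | ⟨rfl, rfl, rfl⟩ | ⟨rfl, rfl, rfl⟩ | ⟨rfl, rfl, rfl⟩ |
    ⟨rfl, rfl, rfl⟩ | ⟨rfl, rfl, rfl⟩ <;> solve_by_elim [hS.swap_left, hS.swap_right]

lemma IsSymmTernary.exists_cons_cons_cons_eq_and_iff {S : α → α → α → Prop}
    (hS : IsSymmTernary S) {a b c : α} :
    (∃ a' b' c', a' ::ₛ b' ::ₛ c' ::ₛ Sym.nil = a ::ₛ b ::ₛ c ::ₛ Sym.nil ∧ S a' b' c') ↔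
      S a b c :=
  ⟨fun ⟨_, _, _, h, h'⟩ => hS.of_cons_cons_cons_eq h h', fun h => ⟨a, b, c, rfl, h⟩⟩

def symmTernaryEquiv : {S : α → α → α → Prop // IsSymmTernary S} ≃ (Sym α 3 → Prop) where
  toFun S s := ∃ a b c, a ::ₛ b ::ₛ c ::ₛ Sym.nil = s ∧ S.1 a b c
  invFun g := ⟨fun a b c => g (a ::ₛ b ::ₛ c ::ₛ Sym.nil),
    ⟨fun x y z => by rw [Sym.cons_swap]; exact id,
     fun x y z => by rw [Sym.cons_swap y]; exact id⟩⟩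
  left_inv S := by
    ext a b c
    exact S.2.exists_cons_cons_cons_eq_and_iff
  right_inv g := by
    ext s
    obtain ⟨a, b, c, rfl⟩ := s.exists_cons_cons_cons_eq
    exact ⟨fun ⟨_, _, _, h, hg⟩ => h ▸ hg, fun h => ⟨a, b, c, rfl, h⟩⟩

lemma symmTernaryEquiv_apply_cons (S : {S : α → α → α → Prop // IsSymmTernary S}) (a b c : α) :
    symmTernaryEquiv S (a ::ₛ b ::ₛ c ::ₛ Sym.nil) ↔ S.1 a b c :=
  S.2.exists_cons_cons_cons_eq_and_iff

end SymmTernary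

section Unital

variable {K : Type*} {z0 : K}

structure IsSymmUnital (z0 : K) (R : K → K → K → Prop) : Prop extends IsSymmTernary R where
  mid_unit : ∀ x y, R x z0 y ↔ x = y

lemma naConds_id_iff {R : K → K → K → Prop} : NAConds R id z0 ↔ IsSymmUnital z0 R := by
  simp only [NAConds, LeftRot, RightRot, CenterRefl, LeftRefl, RightRefl, id_eq,
    Set.mem_singleton_iff, exists_eq_left]
  constructor
  · rintro ⟨-, -, swap_left, swap_right, -, unit, -⟩
    exact ⟨⟨swap_left, swap_right⟩, fun x y => (unit x y).symm⟩
  · rintro ⟨⟨swap_left, swap_right⟩, unit⟩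
    exact ⟨fun x y z h => swap_right _ _ _ (swap_left _ _ _ h),
      fun x y z h => swap_left _ _ _ (swap_right _ _ _ h), swap_left, swap_right,
      fun x y z h => swap_left _ _ _ (swap_right _ _ _ (swap_left _ _ _ h)),
      fun x y => (unit x y).symm, fun _ => trivial⟩

lemma IsSymmUnital.left_unit {R : K → K → K → Prop} (hR : IsSymmUnital z0 R) (x y : K) :
    R z0 x y ↔ x = y :=
  ⟨fun h => (hR.mid_unit x y).1 (hR.swap_left _ _ _ h),
    fun h => hR.swap_left _ _ _ ((hR.mid_unit x y).2 h)⟩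

lemma IsSymmUnital.right_unit {R : K → K → K → Prop} (hR : IsSymmUnital z0 R) (x y : K) :
    R x y z0 ↔ x = y :=
  ⟨fun h => (hR.mid_unit x y).1 (hR.swap_right _ _ _ h),
    fun h => hR.swap_right _ _ _ ((hR.mid_unit x y).2 h)⟩

def extendUnital (z0 : K) (S : {a // a ≠ z0} → {a // a ≠ z0} → {a // a ≠ z0} → Prop) :
    K → K → K → Prop := fun x y z =>
  (x = z0 ∧ y = z) ∨ (y = z0 ∧ x = z) ∨ (z = z0 ∧ x = y) ∨
    ∃ (hx : x ≠ z0) (hy : y ≠ z0) (hz : z ≠ z0), S ⟨x, hx⟩ ⟨y, hy⟩ ⟨z, hz⟩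

lemma extendUnital_val (S : {a // a ≠ z0} → {a // a ≠ z0} → {a // a ≠ z0} → Prop)
    (a b c : {a // a ≠ z0}) : extendUnital z0 S a b c ↔ S a b c := by
  simp [extendUnital, a.2, b.2, c.2]

lemma IsSymmTernary.isSymmUnital_extendUnital
    {S : {a // a ≠ z0} → {a // a ≠ z0} → {a // a ≠ z0} → Prop} (hS : IsSymmTernary S) :
    IsSymmUnital z0 (extendUnital z0 S) := by
  have := hS.swap_left
  have := hS.swap_right
  refine ⟨⟨fun x y z h => ?_, fun x y z h => ?_⟩, fun x y => ?_⟩ <;>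
    unfold extendUnital at * <;> grind

lemma IsSymmUnital.extendUnital_restrict {R : K → K → K → Prop} (hR : IsSymmUnital z0 R) :
    extendUnital z0 (fun a b c => R a b c) = R := by
  have := hR.left_unit
  have := hR.mid_unit
  have := hR.right_unit
  ext x y z
  unfold extendUnital
  grind

def symmUnitalEquiv (z0 : K) :
    {R : K → K → K → Prop // IsSymmUnital z0 R} ≃
      {S : {a // a ≠ z0} → {a // a ≠ z0} → {a // a ≠ z0} → Prop // IsSymmTernary S} where
  toFun R := ⟨fun a b c => R.1 a b c,
    ⟨fun _ _ _ => R.2.swap_left _ _ _, fun _ _ _ => R.2.swap_right _ _ _⟩⟩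
  invFun S := ⟨extendUnital z0 S.1, S.2.isSymmUnital_extendUnital⟩
  left_inv R := Subtype.ext R.2.extendUnital_restrict
  right_inv S := by
    ext a b c
    exact extendUnital_val S.1 a b c

def naFrameEquiv (z0 : K) :
    {R : K → K → K → Prop // NAConds R id z0} ≃ (Sym {a // a ≠ z0} 3 → Prop) :=
  (Equiv.subtypeEquivRight fun _ => naConds_id_iff).trans
    ((symmUnitalEquiv z0).trans symmTernaryEquiv)

lemma naFrameEquiv_apply_cons (R : {R : K → K → K → Prop // NAConds R id z0})
    (a b c : {a // a ≠ z0}) :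
    naFrameEquiv z0 R (a ::ₛ b ::ₛ c ::ₛ Sym.nil) ↔ R.1 a b c :=
  symmTernaryEquiv_apply_cons _ a b c

lemma dense_iff_naFrameEquiv_replicate (R : {R : K → K → K → Prop // NAConds R id z0}) :
    (∀ x, R.1 x x x) ↔ ∀ a, naFrameEquiv z0 R (Sym.replicate 3 a) := by
  refine ⟨fun h a => (naFrameEquiv_apply_cons R a a a).2 (h a), fun h x => ?_⟩
  by_cases hx : x = z0
  · subst hx
    exact ((naConds_id_iff.1 R.2).mid_unit x x).2 rfl
  · exact (naFrameEquiv_apply_cons R ⟨x, hx⟩ _ _).1 (h ⟨x, hx⟩)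

end Unital

lemma Nat.card_subtype_forall_apply_of_injective {α β : Type*} [Finite β] {f : α → β}
    (hf : Injective f) :
    Nat.card {g : β → Prop // ∀ a, g (f a)} = 2 ^ (Nat.card β - Nat.card α) := by
  classical
  let e : {g : β → Prop // ∀ a, g (f a)} ≃ (↥(Set.range f)ᶜ → Prop) :=
    { toFun g b := g.1 b
      invFun h := ⟨fun b => b ∈ Set.range f ∨ ∃ hb : b ∉ Set.range f, h ⟨b, hb⟩,
        fun a => Or.inl ⟨a, rfl⟩⟩
      left_inv g := by
        ext b
        by_cases hb : b ∈ Set.range f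
        · obtain ⟨a, rfl⟩ := hb
          simp [g.2 a]
        · simp [hb]
      right_inv h := by
        ext b
        exact (or_iff_right b.2).trans ⟨fun ⟨_, hb⟩ => hb, fun hb => ⟨b.2, hb⟩⟩ }
  rw [Nat.card_congr e, Nat.card_fun, Nat.card_coe_set_eq, Set.ncard_compl,
    Set.ncard_range_of_injective hf, Nat.card_eq_fintype_card, Fintype.card_prop]

lemma Nat.card_subtype_ne {K : Type*} [Finite K] (z0 : K) :
    Nat.card {a // a ≠ z0} = Nat.card K - 1 :=
  (Nat.card_coe_set_eq ({z0}ᶜ : Set K)).trans (by rw [Set.ncard_compl, Set.ncard_singleton])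

lemma Sym.natCard_three_subtype_ne {K : Type*} [Finite K] (z0 : K) :
    Nat.card (Sym {a // a ≠ z0} 3) = (Nat.card K + 1).choose 3 := by
  have : 0 < Nat.card K := Nat.card_pos_iff.2 ⟨⟨z0⟩, inferInstance⟩
  rw [Sym.natCard_sym_eq_choose, Nat.card_subtype_ne]
  congr 1
  omega

lemma card_naFrame {K : Type*} [Finite K] (z0 : K) :
    Nat.card {R : K → K → K → Prop // NAConds R id z0} = 2 ^ (Nat.card K + 1).choose 3 := by
  rw [Nat.card_congr (naFrameEquiv z0), Nat.card_fun, Sym.natCard_three_subtype_ne,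
    Nat.card_eq_fintype_card, Fintype.card_prop]

lemma card_dense_naFrame {K : Type*} [Finite K] (z0 : K) :
    Nat.card {R : K → K → K → Prop // NAConds R id z0 ∧ ∀ x, R x x x} =
      2 ^ ((Nat.card K + 1).choose 3 - (Nat.card K - 1)) := by
  rw [Nat.card_congr ((Equiv.subtypeSubtypeEquivSubtypeInter _ _).symm.trans
      (Equiv.subtypeEquiv (q := fun g => ∀ a, g (Sym.replicate 3 a)) (naFrameEquiv z0)
        dense_iff_naFrameEquiv_replicate)),
    Nat.card_subtype_forall_apply_of_injective (Sym.replicate_right_injective three_ne_zero),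
    Sym.natCard_three_subtype_ne, Nat.card_subtype_ne]

lemma Nat.six_mul_succ_choose_three (n : ℕ) :
    6 * (n + 1).choose 3 = (n - 1) * n * (n + 1) := by
  rw [show 6 = Nat.factorial 3 from rfl, ← Nat.descFactorial_eq_factorial_mul_choose]
  rcases n with _ | n
  · rfl
  · simp only [Nat.descFactorial_succ, Nat.descFactorial_zero, Nat.reduceSubDiff,
      add_tsub_cancel_right, tsub_zero, mul_one]
    ring

lemma Nat.six_mul_succ_choose_three_sub (n : ℕ) :
    6 * ((n + 1).choose 3 - (n - 1)) = (n - 1) * (n - 2) * (n + 3) := by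
  rcases Nat.lt_or_ge n 2 with hn | hn
  · interval_cases n <;> rfl
  · obtain ⟨k, rfl⟩ := Nat.exists_eq_add_of_le' hn
    have h := Nat.six_mul_succ_choose_three (k + 2)
    have : (k + 1) * (k + 2) * (k + 2 + 1) = (k + 1) * k * (k + 2 + 3) + 6 * (k + 1) := by ring
    simp only [Nat.add_sub_cancel, Nat.add_succ_sub_one] at h ⊢
    omega

/-- Theorem 27(i), symmetric cases: on an `n`-element set `K` with base point
`0` and `⋆ = id`, the number of ternary relations `R` making `(K, R, id, {0})`
an NA-frame is `2^{(n−1)n(n+1)/6}`, and the number making it also dense is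
`2^{(n−1)(n−2)(n+3)/6}` (the exponents being characterized here by `6·E₁`
and `6·E₂`). -/
theorem count_symm_NA_frames {K : Type*} [Fintype K] (z0 : K)
    (n : ℕ) (hn : Fintype.card K = n)
    (E1 E2 : ℕ)
    (hE1 : 6 * E1 = (n - 1) * n * (n + 1))
    (hE2 : 6 * E2 = (n - 1) * (n - 2) * (n + 3)) :
    Nat.card {R : K → K → K → Prop // NAConds R id z0} = 2 ^ E1 ∧
    Nat.card {R : K → K → K → Prop //
        NAConds R id z0 ∧ ∀ x, R x x x} = 2 ^ E2 := by
  rw [card_naFrame, card_dense_naFrame, Nat.card_eq_fintype_card, hn]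
  have h1 := Nat.six_mul_succ_choose_three n
  have h2 := Nat.six_mul_succ_choose_three_sub n
  constructor <;> congr 1 <;> omega
end

section
/- Let A be a Boolean algebra equipped with a binary operation ;, a unary operation ⌣, and a distinguished element 1′ such that for all x, y, z ∈ A: (x ⊔ y);z = (x;z) ⊔ (y;z), (x⌣)⌣ = x, (x ⊔ y)⌣ = x⌣ ⊔ y⌣, (x;y)⌣ = y⌣;x⌣, and x⌣;((x;y)ᶜ) ≤ yᶜ. Let K be the set of ultrafilters of A, and define R = {(X, Y, Z) ∈ K³ : ∀x ∈ X, ∀y ∈ Y, x;y ∈ Z}, ⋆X = {x⌣ : x ∈ X}, and I = {X ∈ K : 1′ ∈ X}. Then ⋆ maps ultrafilters to ultrafilters, and the map ε : A → 𝒫(K) given by ε(x) = {U ∈ K : x ∈ U} is injective and satisfies, for all x, y ∈ A: ε(x ⊔ y) = ε(x) ∪ ε(y); ε(xᶜ) = K ∖ ε(x); ε(x;y) = {Z ∈ K : ∃X ∈ ε(x), ∃Y ∈ ε(y), (X, Y, Z) ∈ R}; ε(x⌣) = {⋆U : U ∈ ε(x)}; and ε(1′) = I. Hence A is isomorphic to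 a subalgebra of the complex algebra of the frame (K, R, ⋆, I). -/
/-!
`⌣` is an involution preserving `⊔`, hence a Boolean automorphism, so `⋆` maps ultrafilters to
ultrafilters. The map `ε` is Stone's representation, which handles `⊔`, `ᶜ` and injectivity by
the prime ideal theorem. For composition, given `x;y ∈ Z` one chooses the ultrafilters `X ∋ x`
and `Y ∋ y` one after the other, each time separating the point from the ideal of elements that
`;` sends outside `Z`; these sets are ideals because `;` is additive and normal in each argument.
Additivity on the right follows from (R5) by conjugating with `⌣`, and (R10) yields `x;⊥ = ⊥`.
-/
/-- `U` is an ultrafilter of the Boolean algebra `A`: `⊥ ∉ U`, `⊤ ∈ U`, `U` is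
upward closed and closed under binary meets, and for every `x` either `x ∈ U`
or `xᶜ ∈ U`. -/
def IsUF {A : Type*} [BooleanAlgebra A] (U : Set A) : Prop :=
  ⊥ ∉ U ∧ ⊤ ∈ U ∧ (∀ x ∈ U, ∀ y, x ≤ y → y ∈ U) ∧
  (∀ x ∈ U, ∀ y ∈ U, x ⊓ y ∈ U) ∧ (∀ x : A, x ∈ U ∨ xᶜ ∈ U)

open Function Order

section

variable {A B C : Type*} [BooleanAlgebra A] [BooleanAlgebra B] [BooleanAlgebra C]

namespace IsUF

variable {U : Set A} {x y : A}

theorem bot_notMem (hU : IsUF U) : ⊥ ∉ U := hU.1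

theorem top_mem (hU : IsUF U) : ⊤ ∈ U := hU.2.1

theorem mem_of_le (hU : IsUF U) (hx : x ∈ U) (hxy : x ≤ y) : y ∈ U := hU.2.2.1 x hx y hxy

theorem mem_or_compl_mem (hU : IsUF U) (x : A) : x ∈ U ∨ xᶜ ∈ U := hU.2.2.2.2 x

theorem inf_mem_iff (hU : IsUF U) : x ⊓ y ∈ U ↔ x ∈ U ∧ y ∈ U :=
  ⟨fun h => ⟨hU.mem_of_le h inf_le_left, hU.mem_of_le h inf_le_right⟩,
    fun h => hU.2.2.2.1 x h.1 y h.2⟩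

theorem compl_mem_iff (hU : IsUF U) : xᶜ ∈ U ↔ x ∉ U := by
  refine ⟨fun hxc hx => hU.bot_notMem ?_, (hU.mem_or_compl_mem x).resolve_left⟩
  simpa only [inf_compl_eq_bot] using hU.inf_mem_iff.2 ⟨hx, hxc⟩

theorem sup_mem_iff (hU : IsUF U) : x ⊔ y ∈ U ↔ x ∈ U ∨ y ∈ U := by
  rw [← not_iff_not, not_or, ← hU.compl_mem_iff, ← hU.compl_mem_iff, ← hU.compl_mem_iff,
    compl_sup, hU.inf_mem_iff]

theorem preimage {F : Type*} [FunLike F B A] [BoundedLatticeHomClass F B A] (f : F)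
    (hU : IsUF U) : IsUF (f ⁻¹' U) := by
  refine ⟨?_, ?_, fun a ha b hab => hU.mem_of_le ha (OrderHomClass.mono f hab),
    fun a ha b hb => ?_, fun a => ?_⟩
  · simpa only [Set.mem_preimage, map_bot] using hU.bot_notMem
  · simpa only [Set.mem_preimage, map_top] using hU.top_mem
  · simpa only [Set.mem_preimage, map_inf] using hU.inf_mem_iff.2 ⟨ha, hb⟩
  · simpa only [Set.mem_preimage, map_compl'] using hU.mem_or_compl_mem (f a)

theorem image_orderIso (e : A ≃o B) (hU : IsUF U) : IsUF (e '' U) :=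
  e.image_eq_preimage_symm U ▸ hU.preimage e.symm

end IsUF

theorem isUF_compl_of_isPrime {J : Ideal A} (hJ : J.IsPrime) : IsUF (J : Set A)ᶜ :=
  ⟨fun h => h J.bot_mem, Ideal.isProper_iff_top_notMem.1 hJ.toIsProper,
    fun _ ha _ hab hb => ha (J.lower hab hb), fun _ ha _ hb hab => (hJ.mem_or_mem hab).elim ha hb,
    fun _ => hJ.toIsProper.notMem_or_compl_notMem⟩

theorem exists_isUF_disjoint_of_notMem {I : Set A} (hI : IsIdeal I) {x : A} (hx : x ∉ I) :
    ∃ U, IsUF U ∧ x ∈ U ∧ Disjoint U I := by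
  have hxI : Disjoint (PFilter.principal x : Set A) hI.toIdeal :=
    Set.disjoint_left.2 fun _ hxa ha => hx (hI.IsLowerSet hxa ha)
  obtain ⟨J, hJ, hIJ, hxJ⟩ := DistribLattice.prime_ideal_of_disjoint_filter_ideal hxI
  exact ⟨_, isUF_compl_of_isPrime hJ, Set.disjoint_left.1 hxJ (PFilter.mem_principal.2 le_rfl),
    Set.disjoint_compl_left_iff_subset.2 hIJ⟩

theorem le_of_forall_isUF_mem {x y : A} (h : ∀ U, IsUF U → x ∈ U → y ∈ U) : x ≤ y := by
  by_contra hxy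
  obtain ⟨U, hU, hxU, hUy⟩ := exists_isUF_disjoint_of_notMem (Ideal.principal y).isIdeal hxy
  exact Set.disjoint_left.1 hUy (h U hU hxU) Ideal.mem_principal_self

theorem IsUF.exists_isUF_forall_op_mem {op : A → B → C}
    (sup_left : ∀ a₁ a₂ b, op (a₁ ⊔ a₂) b = op a₁ b ⊔ op a₂ b)
    (sup_right : ∀ a b₁ b₂, op a (b₁ ⊔ b₂) = op a b₁ ⊔ op a b₂)
    (bot_left : ∀ b, op ⊥ b = ⊥) (bot_right : ∀ a, op a ⊥ = ⊥)
    {Z : Set C} (hZ : IsUF Z) {x : A} {y : B} (hxy : op x y ∈ Z) :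
    ∃ X, IsUF X ∧ x ∈ X ∧ ∃ Y, IsUF Y ∧ y ∈ Y ∧ ∀ a ∈ X, ∀ b ∈ Y, op a b ∈ Z := by
  have mono_left (b : B) : Monotone (op · b) := Monotone.of_map_sup (sup_left · · b)
  have mono_right (a : A) : Monotone (op a) := Monotone.of_map_sup (sup_right a)
  have hI₁ : IsIdeal {a | op a y ∉ Z} := by
    refine ⟨fun a₁ a₂ h ha₂ ha₁ => ha₂ (hZ.mem_of_le ha₁ (mono_left y h)),
      ⟨⊥, by simpa only [Set.mem_ofPred_eq, bot_left] using hZ.bot_notMem⟩,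
      SupClosed.directedOn fun a₁ h₁ a₂ h₂ => ?_⟩
    simp only [Set.mem_ofPred_eq, sup_left, hZ.sup_mem_iff] at h₁ h₂ ⊢
    tauto
  obtain ⟨X, hX, hxX, hXI⟩ := exists_isUF_disjoint_of_notMem hI₁ (not_not.2 hxy)
  have hI₂ : IsIdeal {b | ∃ a ∈ X, op a b ∉ Z} := by
    refine ⟨fun b₁ b₂ h ⟨a, ha, hab⟩ => ⟨a, ha, fun h' => hab (hZ.mem_of_le h' (mono_right a h))⟩,
      ⟨⊥, ⊤, hX.top_mem, by simpa only [bot_right] using hZ.bot_notMem⟩, SupClosed.directedOn ?_⟩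
    rintro b₁ ⟨a₁, ha₁, h₁⟩ b₂ ⟨a₂, ha₂, h₂⟩
    refine ⟨a₁ ⊓ a₂, hX.inf_mem_iff.2 ⟨ha₁, ha₂⟩, ?_⟩
    rw [sup_right, hZ.sup_mem_iff, not_or]
    exact ⟨fun h => h₁ (hZ.mem_of_le h (mono_left b₁ inf_le_left)),
      fun h => h₂ (hZ.mem_of_le h (mono_left b₂ inf_le_right))⟩
  have hy : y ∉ {b | ∃ a ∈ X, op a b ∉ Z} := fun ⟨a, ha, hay⟩ =>
    Set.disjoint_left.1 hXI ha hay
  obtain ⟨Y, hY, hyY, hYI⟩ := exists_isUF_disjoint_of_notMem hI₂ hy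
  exact ⟨X, hX, hxX, Y, hY, hyY, fun a ha b hb => not_not.1 fun h =>
    Set.disjoint_left.1 hYI hb ⟨a, ha, h⟩⟩

def Function.Involutive.toOrderIso {f : A → A} (hf : Involutive f)
    (hsup : ∀ x y, f (x ⊔ y) = f x ⊔ f y) : A ≃o A :=
  (hf.toPerm f).toOrderIso (Monotone.of_map_sup hsup) (Monotone.of_map_sup hsup)

section Converse

variable {rc : A → A → A} {cv : A → A}

theorem rc_sup_right (h5 : ∀ x y z, rc (x ⊔ y) z = rc x z ⊔ rc y z) (h7 : Involutive cv)
    (h8 : ∀ x y, cv (x ⊔ y) = cv x ⊔ cv y) (h9 : ∀ x y, cv (rc x y) = rc (cv y) (cv x))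
    (x y z : A) : rc x (y ⊔ z) = rc x y ⊔ rc x z := by
  have conj (u v : A) : rc u v = cv (rc (cv v) (cv u)) := by rw [h9, h7, h7]
  rw [conj, h8, h5, h8, ← conj, ← conj]

theorem rc_bot_right (h5 : ∀ x y z, rc (x ⊔ y) z = rc x z ⊔ rc y z) (h7 : Involutive cv)
    (h8 : ∀ x y, cv (x ⊔ y) = cv x ⊔ cv y) (h9 : ∀ x y, cv (rc x y) = rc (cv y) (cv x))
    (h10 : ∀ x y, rc (cv x) ((rc x y)ᶜ) ≤ yᶜ) (x : A) : rc x ⊥ = ⊥ := by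
  -- `x;⊥` lies below `x;w` for every `w`, and (R10) puts one such `x;w` below `(x;⊥)ᶜ`.
  have h := h10 (cv x) (rc x ⊥)
  rw [h7] at h
  exact le_compl_self.1
    ((Monotone.of_map_sup (rc_sup_right h5 h7 h8 h9 x) bot_le).trans h)

theorem rc_bot_left (h5 : ∀ x y z, rc (x ⊔ y) z = rc x z ⊔ rc y z) (h7 : Involutive cv)
    (h8 : ∀ x y, cv (x ⊔ y) = cv x ⊔ cv y) (h9 : ∀ x y, cv (rc x y) = rc (cv y) (cv x))
    (h10 : ∀ x y, rc (cv x) ((rc x y)ᶜ) ≤ yᶜ) (y : A) : rc ⊥ y = ⊥ := by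
  have cv_bot : cv ⊥ = ⊥ := (h7.toOrderIso h8).map_bot
  rw [← h7 (rc ⊥ y), h9, cv_bot, rc_bot_right h5 h7 h8 h9 h10, cv_bot]

end Converse

end

/-- Theorem (McKenzie's ultrafilter frame construction, Theorem thm8): let `A`
be a Boolean algebra with operations `;` (rc), `⌣` (cv) and constant `1′` (e)
satisfying axioms (R5), (R7)–(R10).  On the set `K` of ultrafilters of `A`,
put `R X Y Z ↔ ∀ x ∈ X, ∀ y ∈ Y, x;y ∈ Z`, `⋆X = {x⌣ : x ∈ X}`, and
`I = {X : 1′ ∈ X}`.  Then `⋆` maps ultrafilters to ultrafilters, and the map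
`ε(x) = {U : x ∈ U}` is injective and turns `⊔` into union, `ᶜ` into
complement, `;` into frame composition, `⌣` into the `⋆`-image, and `1′`
into `I`; hence `A` embeds in the complex algebra of the frame `(K, R, ⋆, I)`. -/
theorem ultrafilter_frame_embedding {A : Type*} [BooleanAlgebra A]
    (rc : A → A → A) (cv : A → A) (e : A)
    (h5 : ∀ x y z : A, rc (x ⊔ y) z = rc x z ⊔ rc y z)
    (h7 : ∀ x : A, cv (cv x) = x)
    (h8 : ∀ x y : A, cv (x ⊔ y) = cv x ⊔ cv y)
    (h9 : ∀ x y : A, cv (rc x y) = rc (cv y) (cv x))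
    (h10 : ∀ x y : A, rc (cv x) ((rc x y)ᶜ) ≤ yᶜ) :
    (∀ U : Set A, IsUF U → IsUF (cv '' U)) ∧
    Function.Injective
      (fun x : A => ({U : {U : Set A // IsUF U} | x ∈ U.1} :
        Set {U : Set A // IsUF U})) ∧
    (∀ x y : A, {U : {U : Set A // IsUF U} | x ⊔ y ∈ U.1} =
      {U : {U : Set A // IsUF U} | x ∈ U.1} ∪
        {U : {U : Set A // IsUF U} | y ∈ U.1}) ∧
    (∀ x : A, {U : {U : Set A // IsUF U} | xᶜ ∈ U.1} =
      ({U : {U : Set A // IsUF U} | x ∈ U.1})ᶜ) ∧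
    (∀ x y : A, {Z : {U : Set A // IsUF U} | rc x y ∈ Z.1} =
      {Z : {U : Set A // IsUF U} |
        ∃ X : {U : Set A // IsUF U}, x ∈ X.1 ∧
        ∃ Y : {U : Set A // IsUF U}, y ∈ Y.1 ∧
          ∀ a ∈ X.1, ∀ b ∈ Y.1, rc a b ∈ Z.1}) ∧
    (∀ x : A, {W : {U : Set A // IsUF U} | cv x ∈ W.1} =
      {W : {U : Set A // IsUF U} |
        ∃ V : {U : Set A // IsUF U}, x ∈ V.1 ∧ W.1 = cv '' V.1}) ∧
    ({U : {U : Set A // IsUF U} | e ∈ U.1} =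
      {X : {U : Set A // IsUF U} | e ∈ X.1}) := by
  have isUF_image (U : Set A) (hU : IsUF U) : IsUF (cv '' U) :=
    hU.image_orderIso (Involutive.toOrderIso h7 h8)
  refine ⟨isUF_image, fun x y hxy => ?_, fun x y => Set.ext fun U => U.2.sup_mem_iff,
    fun x => Set.ext fun U => U.2.compl_mem_iff, fun x y => ?_, fun x => ?_, rfl⟩
  · have hmem (U : Set A) (hU : IsUF U) : x ∈ U ↔ y ∈ U := Set.ext_iff.1 hxy ⟨U, hU⟩
    exact le_antisymm (le_of_forall_isUF_mem fun U hU => (hmem U hU).1)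
      (le_of_forall_isUF_mem fun U hU => (hmem U hU).2)
  · ext Z
    refine ⟨fun hZ => ?_, fun ⟨X, hxX, Y, hyY, hXY⟩ => hXY x hxX y hyY⟩
    obtain ⟨X, hX, hxX, Y, hY, hyY, hXY⟩ := Z.2.exists_isUF_forall_op_mem h5
      (rc_sup_right h5 h7 h8 h9) (rc_bot_left h5 h7 h8 h9 h10) (rc_bot_right h5 h7 h8 h9 h10) hZ
    exact ⟨⟨X, hX⟩, hxX, ⟨Y, hY⟩, hyY, hXY⟩
  · ext W
    refine ⟨fun hW => ⟨⟨cv '' W.1, isUF_image W.1 W.2⟩, ⟨cv x, hW, h7 x⟩, ?_⟩, ?_⟩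
    · rw [Set.image_image]
      simp only [h7, Set.image_id']
    · rintro ⟨V, hxV, hW⟩
      show cv x ∈ W.1
      rw [hW]
      exact Set.mem_image_of_mem cv hxV
end
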